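/- arXiv:2501.02490 — 5 statements merged into one kernel-verified Lean document; each statement's English description precedes it below -/
import Mathlib

section
/- Suppose G(k) ~ (c_α/(α+1)) k^{α+1} as k → ∞ for some α > -1 and c_α > 0, and define ν_s and s*(K) as the tilted measures ν_s(k) = s^k G(k)/Q_0(s) with mean K at s = s*(K). Then as K → ∞, 1 - s*(K) ~ (α+2)/K, i.e., s*(K) = 1 - (α+2)/K · (1+o(1)). -/
open Filter Finset

set_option maxHeartbeats 1000000 in
lemma wratio {ι : Type*} {l : Filter ι} (w : ι → ℕ → ℝ) (u v : ℕ → ℝ) (ℓ : ℝ)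
    (hv : ∀ k, 0 < v k)
    (hw0 : ∀ᶠ i in l, ∀ k, 0 ≤ w i k) (hw1 : ∀ᶠ i in l, ∀ k, w i k ≤ 1)
    (hsu : ∀ᶠ i in l, Summable (fun k => w i k * u k))
    (hsv : ∀ᶠ i in l, Summable (fun k => w i k * v k))
    (huv : Tendsto (fun k => u k / v k) atTop (nhds ℓ))
    (hV : Tendsto (fun i => ∑' k, w i k * v k) l atTop) :
    Tendsto (fun i => (∑' k, w i k * u k) / (∑' k, w i k * v k)) l (nhds ℓ) := by
  rw [Metric.tendsto_nhds]
  intro ε hε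
  have hε4 : 0 < ε / 4 := by linarith
  obtain ⟨N, hN⟩ := Metric.tendsto_atTop.1 huv (ε / 4) hε4
  have key : ∀ k, N ≤ k → |u k - ℓ * v k| ≤ ε / 4 * v k := by
    intro k hk
    have h1 := (hN k hk).le
    rw [Real.dist_eq] at h1
    have hvk := hv k
    have heq : u k - ℓ * v k = (u k / v k - ℓ) * v k := by
      field_simp
    rw [heq, abs_mul, abs_of_pos hvk]
    exact mul_le_mul_of_nonneg_right h1 hvk.le
  set D := ∑ k ∈ range N, |u k - ℓ * v k| with hDdef
  have hD0 : 0 ≤ D := Finset.sum_nonneg fun k _ => abs_nonneg _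
  have hVbig : ∀ᶠ i in l, max 1 (D / (ε / 4)) ≤ ∑' k, w i k * v k :=
    hV.eventually_ge_atTop _
  filter_upwards [hw0, hw1, hsu, hsv, hVbig] with i h0 h1 hsui hsvi hVi
  set U := ∑' k, w i k * u k with hUdef
  set V := ∑' k, w i k * v k with hVdef
  have hV1 : (1 : ℝ) ≤ V := le_trans (le_max_left _ _) hVi
  have hV0 : (0 : ℝ) < V := lt_of_lt_of_le one_pos hV1
  have hDV : D ≤ ε / 4 * V := by
    have : D / (ε / 4) ≤ V := le_trans (le_max_right _ _) hVi
    calc D = D / (ε / 4) * (ε / 4) := by field_simp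
      _ ≤ V * (ε / 4) := mul_le_mul_of_nonneg_right this hε4.le
      _ = ε / 4 * V := mul_comm _ _
  -- the difference sequence
  have hsub : Summable (fun k => w i k * (u k - ℓ * v k)) := by
    have := hsui.sub (hsvi.mul_left ℓ)
    refine this.congr fun k => ?_
    ring
  have habs : Summable (fun k => |w i k * (u k - ℓ * v k)|) := hsub.abs
  have hUV : U - ℓ * V = ∑' k, w i k * (u k - ℓ * v k) := by
    have h2 : ∑' k, w i k * (u k - ℓ * v k)
        = (∑' k, w i k * u k) - ∑' k, ℓ * (w i k * v k) := by
      rw [← Summable.tsum_sub hsui (hsvi.mul_left ℓ)]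
      exact tsum_congr fun k => by ring
    rw [h2, tsum_mul_left, hUdef, hVdef]
  have habs_le : |U - ℓ * V| ≤ D + ε / 4 * V := by
    rw [hUV]
    have hnorm : |∑' k, w i k * (u k - ℓ * v k)| ≤ ∑' k, |w i k * (u k - ℓ * v k)| := by
      simpa only [Real.norm_eq_abs] using
        norm_tsum_le_tsum_norm (f := fun k => w i k * (u k - ℓ * v k))
          (by simpa only [Real.norm_eq_abs] using habs)
    refine le_trans hnorm ?_
    rw [← Summable.sum_add_tsum_nat_add N habs]
    have head : ∑ k ∈ range N, |w i k * (u k - ℓ * v k)| ≤ D := by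
      refine Finset.sum_le_sum fun k _ => ?_
      rw [abs_mul, abs_of_nonneg (h0 k)]
      calc w i k * |u k - ℓ * v k| ≤ 1 * |u k - ℓ * v k| :=
            mul_le_mul_of_nonneg_right (h1 k) (abs_nonneg _)
        _ = |u k - ℓ * v k| := one_mul _
    have tail : ∑' k, |w i (k + N) * (u (k + N) - ℓ * v (k + N))| ≤ ε / 4 * V := by
      have step : ∀ k : ℕ, |w i (k + N) * (u (k + N) - ℓ * v (k + N))|
          ≤ ε / 4 * (w i (k + N) * v (k + N)) := by
        intro k
        rw [abs_mul, abs_of_nonneg (h0 _)]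
        calc w i (k + N) * |u (k + N) - ℓ * v (k + N)|
            ≤ w i (k + N) * (ε / 4 * v (k + N)) :=
              mul_le_mul_of_nonneg_left (key _ (Nat.le_add_left N k)) (h0 _)
          _ = ε / 4 * (w i (k + N) * v (k + N)) := by ring
      have hsvtail : Summable (fun k => w i (k + N) * v (k + N)) :=
        ((summable_nat_add_iff N).2 hsvi)
      calc ∑' k, |w i (k + N) * (u (k + N) - ℓ * v (k + N))|
          ≤ ∑' k, ε / 4 * (w i (k + N) * v (k + N)) :=
            Summable.tsum_le_tsum step ((summable_nat_add_iff N).2 habs) (hsvtail.mul_left _)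
        _ = ε / 4 * ∑' k, w i (k + N) * v (k + N) := tsum_mul_left
        _ ≤ ε / 4 * V := by
            refine mul_le_mul_of_nonneg_left ?_ hε4.le
            rw [hVdef, ← Summable.sum_add_tsum_nat_add N hsvi]
            have : (0:ℝ) ≤ ∑ k ∈ range N, w i k * v k :=
              Finset.sum_nonneg fun k _ => mul_nonneg (h0 k) (hv k).le
            linarith
    exact add_le_add head tail
  have : |U - ℓ * V| ≤ ε / 2 * V := by
    calc |U - ℓ * V| ≤ D + ε / 4 * V := habs_le
      _ ≤ ε / 4 * V + ε / 4 * V := by linarith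
      _ = ε / 2 * V := by ring
  rw [Real.dist_eq]
  have heq : U / V - ℓ = (U - ℓ * V) / V := by
    field_simp
  rw [heq, abs_div, abs_of_pos hV0]
  have h3 : |U - ℓ * V| / V ≤ ε / 2 := by
    rw [div_le_iff₀ hV0]
    linarith
  linarith


lemma natcast_ratio_tendsto : Tendsto (fun k : ℕ => ((k : ℝ) + 1) / (k : ℝ)) atTop (nhds 1) := by
  have h : ∀ᶠ k : ℕ in atTop, ((k : ℝ) + 1) / (k : ℝ) = 1 + 1 / (k : ℝ) := by
    filter_upwards [eventually_ge_atTop 1] with k hk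
    have : (k : ℝ) ≠ 0 := Nat.cast_ne_zero.2 (by omega)
    field_simp
  rw [tendsto_congr' h]
  have := tendsto_one_div_atTop_nhds_zero_nat (𝕜 := ℝ)
  simpa using tendsto_const_nhds.add this

lemma ratio_rpow_one (β : ℝ) :
    Tendsto (fun k : ℕ => ((k : ℝ) + 1) ^ β / (k : ℝ) ^ β) atTop (nhds 1) := by
  have hcont : ContinuousAt (fun x : ℝ => x ^ β) 1 :=
    Real.continuousAt_rpow_const 1 β (Or.inl one_ne_zero)
  have h2 : Tendsto (fun k : ℕ => (((k : ℝ) + 1) / (k : ℝ)) ^ β) atTop (nhds 1) := by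
    have := hcont.tendsto.comp natcast_ratio_tendsto
    simpa [Real.one_rpow, Function.comp_def] using this
  refine h2.congr' ?_
  filter_upwards [eventually_ge_atTop 1] with k hk
  have hk0 : (0 : ℝ) < (k : ℝ) := by exact_mod_cast Nat.pos_of_ne_zero (by omega)
  rw [Real.div_rpow (by linarith) hk0.le]

lemma ratio_rpow_one' (β : ℝ) :
    Tendsto (fun k : ℕ => (k : ℝ) ^ β / ((k : ℝ) + 1) ^ β) atTop (nhds 1) := by
  have := (ratio_rpow_one β).inv₀ one_ne_zero
  rw [inv_one] at this
  refine this.congr' ?_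
  filter_upwards [eventually_ge_atTop 1] with k hk
  rw [inv_div]

lemma sum_rpow_tendsto (β : ℝ) (hβ : 0 < β) :
    Tendsto (fun k : ℕ => (∑ j ∈ Finset.range (k + 1), (j : ℝ) ^ β) / (k : ℝ) ^ (β + 1))
      atTop (nhds (1 / (β + 1))) := by
  have hβ1 : (0 : ℝ) < β + 1 := by linarith
  have hint : ∀ n : ℕ, ∫ x in (0:ℝ)..(n:ℝ), x ^ β = (n : ℝ) ^ (β + 1) / (β + 1) := by
    intro n
    rw [integral_rpow (Or.inl (by linarith))]
    rw [Real.zero_rpow (by positivity)]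
    ring
  have hii : ∀ a b : ℝ, IntervalIntegrable (fun x : ℝ => x ^ β) MeasureTheory.volume a b :=
    fun a b => intervalIntegral.intervalIntegrable_rpow (Or.inl hβ.le)
  -- j^β ≤ ∫_j^{j+1} x^β ≤ (j+1)^β
  have hup : ∀ j : ℕ, (j : ℝ) ^ β ≤ ∫ x in (j:ℝ)..((j:ℝ)+1), x ^ β := by
    intro j
    have : ∫ x in (j:ℝ)..((j:ℝ)+1), (j:ℝ) ^ β = (j : ℝ) ^ β := by simp
    rw [← this]
    refine intervalIntegral.integral_mono_on (by linarith) (by simp) (hii _ _) ?_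
    intro x hx
    exact Real.rpow_le_rpow (by positivity) hx.1 hβ.le
  have hdown : ∀ j : ℕ, (∫ x in (j:ℝ)..((j:ℝ)+1), x ^ β) ≤ ((j : ℝ) + 1) ^ β := by
    intro j
    have : ∫ x in (j:ℝ)..((j:ℝ)+1), ((j:ℝ)+1) ^ β = ((j : ℝ) + 1) ^ β := by simp
    rw [← this]
    refine intervalIntegral.integral_mono_on (by linarith) (hii _ _) (by simp) ?_
    intro x hx
    have hx0 : (0:ℝ) ≤ x := le_trans (by positivity) hx.1
    exact Real.rpow_le_rpow hx0 hx.2 hβ.le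
  -- telescoping
  have hsum : ∀ n : ℕ, ∑ j ∈ range n, (∫ x in (j:ℝ)..((j:ℝ)+1), x ^ β)
      = ∫ x in (0:ℝ)..(n:ℝ), x ^ β := by
    intro n
    have := intervalIntegral.sum_integral_adjacent_intervals
      (f := fun x : ℝ => x ^ β) (μ := MeasureTheory.volume) (a := fun j : ℕ => (j : ℝ))
      (n := n) (fun k _ => by exact_mod_cast hii (k : ℝ) ((k : ℝ) + 1))
    simpa [Nat.cast_succ] using this
  -- sandwich on sums
  have lower : ∀ k : ℕ, (k : ℝ) ^ (β + 1) / (β + 1) ≤ ∑ j ∈ range (k + 1), (j : ℝ) ^ β := by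
    intro k
    have h1 : ∫ x in (0:ℝ)..(k:ℝ), x ^ β ≤ ∑ j ∈ range k, ((j : ℝ) + 1) ^ β := by
      rw [← hsum k]
      exact Finset.sum_le_sum fun j _ => hdown j
    have h2 : ∑ j ∈ range k, ((j : ℝ) + 1) ^ β ≤ ∑ j ∈ range (k + 1), (j : ℝ) ^ β := by
      rw [Finset.sum_range_succ' (fun j : ℕ => (j : ℝ) ^ β) k]
      have hz : ((0 : ℕ) : ℝ) ^ β = 0 := by
        rw [Nat.cast_zero, Real.zero_rpow hβ.ne']
      rw [hz, add_zero]
      exact le_of_eq (Finset.sum_congr rfl fun j _ => by push_cast; ring_nf)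
    rw [hint k] at h1
    linarith
  have upper : ∀ k : ℕ, ∑ j ∈ range (k + 1), (j : ℝ) ^ β
      ≤ ((k : ℝ) + 1) ^ (β + 1) / (β + 1) := by
    intro k
    have h1 : ∑ j ∈ range (k + 1), (j : ℝ) ^ β
        ≤ ∫ x in (0:ℝ)..(((k + 1 : ℕ)):ℝ), x ^ β := by
      rw [← hsum (k + 1)]
      exact Finset.sum_le_sum fun j _ => hup j
    rw [hint (k + 1)] at h1
    push_cast at h1
    exact h1
  -- conclude by squeeze
  have hlow' : ∀ᶠ k : ℕ in atTop, 1 / (β + 1) ≤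
      (∑ j ∈ range (k + 1), (j : ℝ) ^ β) / (k : ℝ) ^ (β + 1) := by
    filter_upwards [eventually_ge_atTop 1] with k hk
    have hk0 : (0 : ℝ) < (k : ℝ) ^ (β + 1) := by
      have : (0:ℝ) < (k:ℝ) := by exact_mod_cast Nat.pos_of_ne_zero (by omega)
      positivity
    rw [le_div_iff₀ hk0]
    calc 1 / (β + 1) * (k : ℝ) ^ (β + 1) = (k : ℝ) ^ (β + 1) / (β + 1) := by ring
      _ ≤ _ := lower k
  have hhigh' : ∀ᶠ k : ℕ in atTop,
      (∑ j ∈ range (k + 1), (j : ℝ) ^ β) / (k : ℝ) ^ (β + 1)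
      ≤ (((k : ℝ) + 1) ^ (β + 1) / (k : ℝ) ^ (β + 1)) / (β + 1) := by
    filter_upwards [eventually_ge_atTop 1] with k hk
    have hk0 : (0 : ℝ) < (k : ℝ) ^ (β + 1) := by
      have : (0:ℝ) < (k:ℝ) := by exact_mod_cast Nat.pos_of_ne_zero (by omega)
      positivity
    have hre : (((k:ℝ)+1) ^ (β + 1) / (k:ℝ) ^ (β + 1)) / (β + 1)
        = (((k:ℝ)+1) ^ (β + 1) / (β + 1)) / (k:ℝ) ^ (β + 1) := by ring
    rw [hre]
    gcongr
    exact upper k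
  have hhightend : Tendsto (fun k : ℕ => (((k : ℝ) + 1) ^ (β + 1) / (k : ℝ) ^ (β + 1)) / (β + 1))
      atTop (nhds (1 / (β + 1))) := by
    have := (ratio_rpow_one (β + 1)).div_const (β + 1)
    simpa using this
  exact tendsto_of_tendsto_of_tendsto_of_le_of_le' tendsto_const_nhds hhightend hlow' hhigh'

set_option maxHeartbeats 2000000 in
/-- If `G(k) ~ (c/(α+1)) k^{α+1}` with `α > -1`, `c > 0`, and `s*(K)` is the
tilt parameter in `(0,1)` for which `ν_s(k) = s^k G(k)/Q₀(s)` has mean `K`, then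
`1 - s*(K) ~ (α+2)/K` as `K → ∞`, i.e. `(1 - s*(K))·K → α+2`. -/
theorem stmt8 (α c : ℝ) (hα : -1 < α) (hc : 0 < c) (G : ℕ → ℝ) (hGpos : ∀ k, 0 < G k)
    (hG : Tendsto (fun k : ℕ => G k / (k : ℝ) ^ (α + 1)) atTop (nhds (c / (α + 1))))
    (sStar : ℝ → ℝ)
    (hsStar : ∀ K : ℝ, 0 < K → sStar K ∈ Set.Ioo (0 : ℝ) 1 ∧
      (∑' k : ℕ, (k : ℝ) * (sStar K) ^ k * G k) / (∑' k : ℕ, (sStar K) ^ k * G k) = K) :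
    Tendsto (fun K : ℝ => (1 - sStar K) * K) atTop (nhds (α + 2)) := by
  have hα1 : (0:ℝ) < α + 1 := by linarith
  have hα2 : (0:ℝ) < α + 2 := by linarith
  set L := c / (α + 1) with hLdef
  have hL : 0 < L := div_pos hc hα1
  -- polynomial bound on G
  set m : ℕ := ⌈α + 1⌉₊ with hmdef
  have hm : α + 1 ≤ (m : ℝ) := Nat.le_ceil _
  obtain ⟨M, hM⟩ : ∃ M : ℝ, ∀ k : ℕ, G k / (k:ℝ) ^ (α+1) ≤ M := by
    obtain ⟨M, hM⟩ := hG.bddAbove_range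
    exact ⟨M, fun k => hM (Set.mem_range_self k)⟩
  set C : ℝ := max M (G 0) with hCdef
  have hC0 : 0 < C := lt_of_lt_of_le (hGpos 0) (le_max_right _ _)
  have hpoly : ∀ k : ℕ, G k ≤ C * ((k:ℝ) + 1) ^ m := by
    intro k
    rcases Nat.eq_zero_or_pos k with rfl | hk
    · have : G 0 ≤ C := le_max_right _ _
      simpa using this
    · have hk1 : (1:ℝ) ≤ (k:ℝ) := by exact_mod_cast hk
      have hkpos : (0:ℝ) < (k:ℝ) ^ (α+1) := Real.rpow_pos_of_pos (by linarith) _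
      have h1 : G k ≤ M * (k:ℝ) ^ (α+1) := by
        have h := hM k
        calc G k = G k / (k:ℝ)^(α+1) * (k:ℝ)^(α+1) := by field_simp
          _ ≤ M * (k:ℝ)^(α+1) := mul_le_mul_of_nonneg_right h hkpos.le
      have h2 : (k:ℝ) ^ (α+1) ≤ ((k:ℝ)+1) ^ m := by
        calc (k:ℝ) ^ (α+1) ≤ (k:ℝ) ^ ((m:ℕ):ℝ) := Real.rpow_le_rpow_of_exponent_le hk1 hm
          _ = (k:ℝ) ^ (m:ℕ) := Real.rpow_natCast _ m
          _ ≤ ((k:ℝ)+1) ^ (m:ℕ) := pow_le_pow_left₀ (by positivity) (by linarith) m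
      calc G k ≤ M * (k:ℝ)^(α+1) := h1
        _ ≤ C * (k:ℝ)^(α+1) :=
            mul_le_mul_of_nonneg_right (le_max_left _ _) hkpos.le
        _ ≤ C * ((k:ℝ)+1)^m := mul_le_mul_of_nonneg_left h2 hC0.le
  -- auxiliary summability
  have hsummine : ∀ s : ℝ, s ∈ Set.Ioo (0:ℝ) 1 →
      ∀ p : ℕ, Summable (fun k : ℕ => ((k:ℝ)+1) ^ p * s ^ k) := by
    intro s hs p
    have hs1 : ‖s‖ < 1 := by rw [Real.norm_eq_abs, abs_of_pos hs.1]; exact hs.2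
    have h := summable_pow_mul_geometric_of_norm_lt_one (R := ℝ) p hs1
    have h2 := (summable_nat_add_iff 1).2 h
    have h3 := h2.mul_left (1/s)
    refine h3.congr fun k => ?_
    have hsne : s ≠ 0 := ne_of_gt hs.1
    push_cast
    field_simp
    ring
  -- A = partial sums of G
  set A : ℕ → ℝ := fun k => ∑ j ∈ Finset.range (k+1), G j with hAdef
  have hA0 : ∀ k, 0 < A k := fun k =>
    Finset.sum_pos (fun j _ => hGpos j) (Finset.nonempty_range_iff.2 (Nat.succ_ne_zero k))
  have hAle : ∀ k, A k ≤ C * ((k:ℝ)+1) ^ (m+1) := by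
    intro k
    have h1 : ∀ j ∈ Finset.range (k+1), G j ≤ C * ((k:ℝ)+1) ^ m := by
      intro j hj
      have hjk : (j:ℝ) ≤ (k:ℝ) := by
        exact_mod_cast Nat.lt_succ_iff.1 (Finset.mem_range.1 hj)
      calc G j ≤ C * ((j:ℝ)+1)^m := hpoly j
        _ ≤ C * ((k:ℝ)+1)^m := by
            refine mul_le_mul_of_nonneg_left (pow_le_pow_left₀ (by positivity) (by linarith) m)
              hC0.le
    calc A k ≤ ∑ j ∈ Finset.range (k+1), C * ((k:ℝ)+1) ^ m := Finset.sum_le_sum h1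
      _ = ((k:ℕ)+1 : ℕ) * (C * ((k:ℝ)+1) ^ m) := by
          rw [Finset.sum_const, Finset.card_range]; push_cast; ring
      _ = C * ((k:ℝ)+1) ^ (m+1) := by push_cast; ring
  have hsum0 : ∀ s ∈ Set.Ioo (0:ℝ) 1, Summable (fun k => s ^ k * G k) := by
    intro s hs
    refine Summable.of_nonneg_of_le
      (fun k => mul_nonneg (pow_nonneg hs.1.le k) (hGpos k).le) (fun k => ?_)
      (((hsummine s hs m).mul_left C))
    calc s^k * G k ≤ s^k * (C * ((k:ℝ)+1)^m) :=
          mul_le_mul_of_nonneg_left (hpoly k) (pow_nonneg hs.1.le k)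
      _ = C * (((k:ℝ)+1)^m * s^k) := by ring
  have hsum1 : ∀ s ∈ Set.Ioo (0:ℝ) 1, Summable (fun k : ℕ => s ^ k * ((k:ℝ) * G k)) := by
    intro s hs
    refine Summable.of_nonneg_of_le
      (fun k => mul_nonneg (pow_nonneg hs.1.le k)
        (mul_nonneg (Nat.cast_nonneg k) (hGpos k).le)) (fun k => ?_)
      (((hsummine s hs (m+1)).mul_left C))
    have hkk : (k:ℝ) * G k ≤ ((k:ℝ)+1) * (C * ((k:ℝ)+1)^m) := by
      have := hpoly k
      have hk0 : (0:ℝ) ≤ (k:ℝ) := Nat.cast_nonneg k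
      nlinarith [hGpos k]
    calc s^k * ((k:ℝ) * G k) ≤ s^k * (((k:ℝ)+1) * (C * ((k:ℝ)+1)^m)) :=
          mul_le_mul_of_nonneg_left hkk (pow_nonneg hs.1.le k)
      _ = C * (((k:ℝ)+1)^(m+1) * s^k) := by ring
  have hsumA : ∀ s ∈ Set.Ioo (0:ℝ) 1, Summable (fun k => s ^ k * A k) := by
    intro s hs
    refine Summable.of_nonneg_of_le
      (fun k => mul_nonneg (pow_nonneg hs.1.le k) (hA0 k).le) (fun k => ?_)
      (((hsummine s hs (m+1)).mul_left C))
    calc s^k * A k ≤ s^k * (C * ((k:ℝ)+1)^(m+1)) :=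
          mul_le_mul_of_nonneg_left (hAle k) (pow_nonneg hs.1.le k)
      _ = C * (((k:ℝ)+1)^(m+1) * s^k) := by ring
  -- Step: asymptotics of A via wratio with indicator weights
  have hAasym : Tendsto (fun k : ℕ => A k / (k:ℝ) ^ (α+2)) atTop (nhds (L/(α+2))) := by
    set v : ℕ → ℝ := fun j => ((j:ℝ)+1) ^ (α+1) with hvdef
    have hv : ∀ j, 0 < v j := fun j => Real.rpow_pos_of_pos (by positivity) _
    set w : ℕ → ℕ → ℝ := fun k j => if j ≤ k then (1:ℝ) else 0 with hwdef
    have husum : ∀ k : ℕ, ∑' j, w k j * G j = A k := by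
      intro k
      rw [tsum_eq_sum (s := Finset.range (k+1))
        (fun j hj => by
          have : ¬ (j ≤ k) := by
            intro h; exact hj (Finset.mem_range.2 (Nat.lt_succ_of_le h))
          simp [hwdef, this])]
      refine Finset.sum_congr rfl fun j hj => ?_
      have : j ≤ k := Nat.lt_succ_iff.1 (Finset.mem_range.1 hj)
      simp [hwdef, this]
    set Vk : ℕ → ℝ := fun k => ∑ j ∈ Finset.range (k+1), ((j:ℝ)+1) ^ (α+1) with hVkdef
    have hvsum : ∀ k : ℕ, ∑' j, w k j * v j = Vk k := by
      intro k
      rw [tsum_eq_sum (s := Finset.range (k+1))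
        (fun j hj => by
          have : ¬ (j ≤ k) := by
            intro h; exact hj (Finset.mem_range.2 (Nat.lt_succ_of_le h))
          simp [hwdef, this])]
      refine Finset.sum_congr rfl fun j hj => ?_
      have : j ≤ k := Nat.lt_succ_iff.1 (Finset.mem_range.1 hj)
      simp [hwdef, hvdef, this]
    have huv : Tendsto (fun j : ℕ => G j / v j) atTop (nhds L) := by
      have h1 := hG.mul (ratio_rpow_one' (α+1))
      rw [mul_one] at h1
      refine h1.congr' ?_
      filter_upwards [eventually_ge_atTop 1] with j hj
      have hj0 : (0:ℝ) < (j:ℝ) := by exact_mod_cast Nat.pos_of_ne_zero (by omega)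
      have hjne : (j:ℝ) ^ (α+1) ≠ 0 := (Real.rpow_pos_of_pos hj0 _).ne'
      have hvne : v j ≠ 0 := (hv j).ne'
      field_simp [hvdef]
      rfl
    have hVtend : Tendsto Vk atTop atTop := by
      refine tendsto_atTop_mono ?_ tendsto_natCast_atTop_atTop
      intro k
      have h1 : ∀ j ∈ Finset.range (k+1), (1:ℝ) ≤ ((j:ℝ)+1) ^ (α+1) := by
        intro j _
        calc (1:ℝ) = (1:ℝ) ^ (α+1) := (Real.one_rpow _).symm
          _ ≤ ((j:ℝ)+1) ^ (α+1) := by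
              have hj0 : (0:ℝ) ≤ (j:ℝ) := Nat.cast_nonneg j
              exact Real.rpow_le_rpow zero_le_one (by linarith) hα1.le
      calc (k:ℝ) ≤ ((k:ℕ)+1 : ℕ) := by exact_mod_cast Nat.le_succ k
        _ = ∑ _j ∈ Finset.range (k+1), (1:ℝ) := by
            rw [Finset.sum_const, Finset.card_range]; push_cast; ring
        _ ≤ Vk k := Finset.sum_le_sum h1
    have hAV : Tendsto (fun k => A k / Vk k) atTop (nhds L) := by
      have h := wratio (l := (atTop : Filter ℕ)) w G v L hv
        (Eventually.of_forall (fun k j => by by_cases h : j ≤ k <;> simp [hwdef, h]))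
        (Eventually.of_forall (fun k j => by by_cases h : j ≤ k <;> simp [hwdef, h]))
        (Eventually.of_forall (fun k => summable_of_ne_finset_zero
          (s := Finset.range (k+1)) (fun j hj => by
            have : ¬ (j ≤ k) := fun h => hj (Finset.mem_range.2 (Nat.lt_succ_of_le h))
            simp [hwdef, this])))
        (Eventually.of_forall (fun k => summable_of_ne_finset_zero
          (s := Finset.range (k+1)) (fun j hj => by
            have : ¬ (j ≤ k) := fun h => hj (Finset.mem_range.2 (Nat.lt_succ_of_le h))
            simp [hwdef, this])))
        huv
        (by
          refine hVtend.congr fun k => ?_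
          rw [hvsum k])
      refine h.congr fun k => ?_
      rw [husum k, hvsum k]
    -- Vk asymptotics
    have hVkasym : Tendsto (fun k : ℕ => Vk k / (k:ℝ) ^ (α+2)) atTop (nhds (1/(α+2))) := by
      have he2 : α + 1 + 1 = α + 2 := by ring
      have hS := (sum_rpow_tendsto (α+1) hα1).comp (tendsto_add_atTop_nat 1)
      rw [he2] at hS
      have hratio := ratio_rpow_one (α+2)
      have h := hS.mul hratio
      rw [mul_one] at h
      refine Tendsto.congr' ?_ h
      filter_upwards [eventually_ge_atTop 1] with k hk
      simp only [Function.comp_apply]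
      have hk0 : (0:ℝ) < (k:ℝ) := by exact_mod_cast Nat.pos_of_ne_zero (by omega)
      have hkne : (k:ℝ) ^ (α+2) ≠ 0 := (Real.rpow_pos_of_pos hk0 _).ne'
      have hk1ne : ((k:ℝ)+1) ^ (α+2) ≠ 0 :=
        (Real.rpow_pos_of_pos (by positivity) _).ne'
      have hsumeq : ∑ j ∈ Finset.range ((k+1) + 1), (j : ℝ) ^ (α+1) = Vk k := by
        rw [Finset.sum_range_succ' (fun j : ℕ => (j : ℝ) ^ (α+1)) (k+1)]
        have hz : ((0:ℕ) : ℝ) ^ (α+1) = 0 := by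
          rw [Nat.cast_zero, Real.zero_rpow hα1.ne']
        rw [hz, add_zero, hVkdef]
        exact Finset.sum_congr rfl fun j _ => by push_cast; ring_nf
      have hcast : ((k+1 : ℕ):ℝ) = (k:ℝ) + 1 := by push_cast; ring
      rw [hsumeq, hcast]
      field_simp
    have h := hAV.mul hVkasym
    have hL2 : L * (1/(α+2)) = L / (α+2) := by ring
    rw [hL2] at h
    refine h.congr' ?_
    filter_upwards [eventually_ge_atTop 1] with k hk
    have hk0 : (0:ℝ) < (k:ℝ) := by exact_mod_cast Nat.pos_of_ne_zero (by omega)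
    have hkne : (k:ℝ) ^ (α+2) ≠ 0 := (Real.rpow_pos_of_pos hk0 _).ne'
    have hVkne : Vk k ≠ 0 := by
      have : (0:ℝ) < Vk k :=
        Finset.sum_pos (fun j _ => Real.rpow_pos_of_pos (by positivity) _)
          (Finset.nonempty_range_iff.2 (Nat.succ_ne_zero k))
      exact this.ne'
    field_simp
  -- coefficient ratio for the main application
  have huv2 : Tendsto (fun k : ℕ => ((k:ℝ) * G k) / A k) atTop (nhds (α+2)) := by
    have hne : L / (α+2) ≠ 0 := (div_pos hL hα2).ne'
    have h := hG.div hAasym hne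
    have hval : L / (L / (α+2)) = α + 2 := by field_simp
    rw [hval] at h
    refine h.congr' ?_
    filter_upwards [eventually_ge_atTop 1] with k hk
    have hk0 : (0:ℝ) < (k:ℝ) := by exact_mod_cast Nat.pos_of_ne_zero (by omega)
    have hkne1 : (k:ℝ) ^ (α+1) ≠ 0 := (Real.rpow_pos_of_pos hk0 _).ne'
    have hAne : A k ≠ 0 := (hA0 k).ne'
    have hsplit : (k:ℝ) ^ (α+2) = (k:ℝ) ^ (α+1) * (k:ℝ) := by
      rw [show α+2 = (α+1)+1 by ring, Real.rpow_add_one hk0.ne' (α+1)]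
    simp only [Pi.div_apply]
    rw [hsplit]
    field_simp
  -- Cauchy product identity
  have hiden : ∀ s ∈ Set.Ioo (0:ℝ) 1,
      (∑' k : ℕ, s ^ k * G k) = (1 - s) * ∑' k : ℕ, s ^ k * A k := by
    intro s hs
    have h1s : (0:ℝ) < 1 - s := by linarith [hs.2]
    have hfe : (fun k : ℕ => ‖s ^ k * G k‖) = fun k : ℕ => s ^ k * G k :=
      funext fun k => Real.norm_of_nonneg (mul_nonneg (pow_nonneg hs.1.le k) (hGpos k).le)
    have hfn : Summable (fun k : ℕ => ‖s ^ k * G k‖) := by rw [hfe]; exact hsum0 s hs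
    have hge : (fun k : ℕ => ‖s ^ k‖) = fun k : ℕ => s ^ k :=
      funext fun k => Real.norm_of_nonneg (pow_nonneg hs.1.le k)
    have hgn : Summable (fun k : ℕ => ‖s ^ k‖) := by
      rw [hge]; exact summable_geometric_of_lt_one hs.1.le hs.2
    have hprod := tsum_mul_tsum_eq_tsum_sum_range_of_summable_norm hfn hgn
    have hinner : ∀ n : ℕ, ∑ k ∈ Finset.range (n+1), (s ^ k * G k) * s ^ (n - k)
        = s ^ n * A n := by
      intro n
      rw [hAdef, Finset.mul_sum]
      refine Finset.sum_congr rfl fun k hk => ?_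
      have hkn : k ≤ n := Nat.lt_succ_iff.1 (Finset.mem_range.1 hk)
      have hpow : s ^ k * s ^ (n - k) = s ^ n := by
        rw [← pow_add, Nat.add_sub_cancel' hkn]
      calc (s ^ k * G k) * s ^ (n-k) = (s ^ k * s ^ (n-k)) * G k := by ring
        _ = s ^ n * G k := by rw [hpow]
    have hgeom : ∑' k : ℕ, s ^ k = (1 - s)⁻¹ := tsum_geometric_of_lt_one hs.1.le hs.2
    rw [hgeom, tsum_congr hinner] at hprod
    rw [← hprod]
    field_simp
  -- limit of the Abel ratio as s → 1⁻
  have hR0 : Tendsto (fun s : ℝ => (∑' k : ℕ, s ^ k * ((k:ℝ) * G k)) / (∑' k : ℕ, s ^ k * A k))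
      (nhdsWithin 1 (Set.Iio 1)) (nhds (α+2)) := by
    have hIoo : ∀ᶠ s in nhdsWithin (1:ℝ) (Set.Iio 1), s ∈ Set.Ioo (0:ℝ) 1 :=
      Ioo_mem_nhdsLT_of_mem (by norm_num : (1:ℝ) ∈ Set.Ioc (0:ℝ) 1)
    refine wratio (fun s k => s ^ k) (fun k => (k:ℝ) * G k) A (α+2) hA0 ?_ ?_ ?_ ?_ huv2 ?_
    · filter_upwards [hIoo] with s hs k; exact pow_nonneg hs.1.le k
    · filter_upwards [hIoo] with s hs k; exact pow_le_one₀ hs.1.le hs.2.le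
    · filter_upwards [hIoo] with s hs; exact hsum1 s hs
    · filter_upwards [hIoo] with s hs; exact hsumA s hs
    · have hlow : Tendsto (fun s : ℝ => (1 - s)⁻¹ * G 0)
          (nhdsWithin 1 (Set.Iio 1)) atTop := by
        have h1 : Tendsto (fun s : ℝ => 1 - s) (nhdsWithin 1 (Set.Iio 1))
            (nhdsWithin 0 (Set.Ioi 0)) := by
          refine tendsto_nhdsWithin_of_tendsto_nhds_of_eventually_within _ ?_ ?_
          · have h2 : Tendsto (fun s : ℝ => 1 - s) (nhds 1) (nhds 0) := by
              have h3 := ((continuous_const (y := (1:ℝ))).sub continuous_id).tendsto (1:ℝ)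
              simpa [Pi.sub_def] using h3
            exact h2.mono_left nhdsWithin_le_nhds
          · filter_upwards [self_mem_nhdsWithin] with s hs
            simp only [Set.mem_Iio] at hs
            simp only [Set.mem_Ioi]
            linarith
        exact (tendsto_inv_nhdsGT_zero.comp h1).atTop_mul_const (hGpos 0)
      refine tendsto_atTop_mono' _ ?_ hlow
      filter_upwards [hIoo] with s hs
      have hgeo : ∑' k : ℕ, s ^ k * G 0 = (1-s)⁻¹ * G 0 := by
        rw [tsum_mul_right, tsum_geometric_of_lt_one hs.1.le hs.2]
      rw [← hgeo]
      refine Summable.tsum_le_tsum (fun k => ?_)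
        ((summable_geometric_of_lt_one hs.1.le hs.2).mul_right (G 0)) (hsumA s hs)
      refine mul_le_mul_of_nonneg_left ?_ (pow_nonneg hs.1.le k)
      exact Finset.single_le_sum (f := G) (fun j _ => (hGpos j).le)
        (Finset.mem_range.2 (Nat.succ_pos k))
  -- sStar tends to 1 from below
  have hs1 : Tendsto sStar atTop (nhdsWithin (1:ℝ) (Set.Iio 1)) := by
    rw [tendsto_nhdsWithin_iff]
    constructor
    · rw [Metric.tendsto_nhds]
      intro ε hε
      set δ := min ε (1/2) with hδdef
      have hδ0 : 0 < δ := lt_min hε (by norm_num)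
      have hδ2 : δ ≤ 1/2 := min_le_right _ _
      have hδε : δ ≤ ε := min_le_left _ _
      set s₀ : ℝ := 1 - δ with hs₀def
      have hs₀mem : s₀ ∈ Set.Ioo (0:ℝ) 1 := by
        constructor
        · simp only [hs₀def]; linarith
        · simp only [hs₀def]; linarith
      set B := (∑' k : ℕ, (k:ℝ) * s₀ ^ k * G k) / G 0 with hBdef
      filter_upwards [eventually_gt_atTop (max 0 B)] with K hK
      have hK0 : 0 < K := lt_of_le_of_lt (le_max_left _ _) hK
      obtain ⟨hmem, heq⟩ := hsStar K hK0
      have hlt : s₀ < sStar K := by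
        by_contra hcon
        push_neg at hcon
        have hQ1le : (∑' k : ℕ, (k:ℝ) * (sStar K) ^ k * G k)
            ≤ ∑' k : ℕ, (k:ℝ) * s₀ ^ k * G k := by
          refine Summable.tsum_le_tsum (fun k => ?_)
            ((hsum1 _ hmem).congr fun k => by ring)
            ((hsum1 _ hs₀mem).congr fun k => by ring)
          refine mul_le_mul_of_nonneg_right ?_ (hGpos k).le
          refine mul_le_mul_of_nonneg_left ?_ (Nat.cast_nonneg k)
          exact pow_le_pow_left₀ hmem.1.le hcon k
        have hQ0ge : G 0 ≤ ∑' k : ℕ, (sStar K) ^ k * G k := by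
          have hle := Summable.le_tsum (hsum0 _ hmem) 0
            (fun j _ => mul_nonneg (pow_nonneg hmem.1.le j) (hGpos j).le)
          simpa using hle
        have hQ1nonneg : 0 ≤ ∑' k : ℕ, (k:ℝ) * s₀ ^ k * G k :=
          tsum_nonneg fun k => mul_nonneg
            (mul_nonneg (Nat.cast_nonneg k) (pow_nonneg hs₀mem.1.le k)) (hGpos k).le
        have hKB : K ≤ B := by
          rw [← heq, hBdef]
          exact div_le_div₀ hQ1nonneg hQ1le (hGpos 0) hQ0ge
        have hBK : B < K := lt_of_le_of_lt (le_max_right 0 B) hK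
        linarith
      rw [Real.dist_eq, abs_of_nonpos (by linarith [hmem.2])]
      have hfin : 1 - sStar K < δ := by
        have : s₀ = 1 - δ := hs₀def
        linarith
      linarith
    · filter_upwards [eventually_gt_atTop 0] with K hK
      exact Set.mem_Iio.2 (hsStar K hK).1.2
  -- conclude
  have hcomp := hR0.comp hs1
  refine Tendsto.congr' ?_ hcomp
  filter_upwards [eventually_gt_atTop 0] with K hK
  simp only [Function.comp_apply]
  obtain ⟨hmem, heq⟩ := hsStar K hK
  set s := sStar K with hsdef
  have h1s : (0:ℝ) < 1 - s := by linarith [hmem.2]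
  have hVs : (0:ℝ) < ∑' k : ℕ, s ^ k * A k := by
    have hle := Summable.le_tsum (hsumA _ hmem) 0
      (fun j _ => mul_nonneg (pow_nonneg hmem.1.le j) (hA0 j).le)
    have h00 : s ^ 0 * A 0 = G 0 := by simp [hAdef]
    rw [h00] at hle
    exact lt_of_lt_of_le (hGpos 0) hle
  have hQ0eq := hiden _ hmem
  rw [← heq]
  have hQ1eq : (∑' k : ℕ, s ^ k * ((k:ℝ) * G k))
      = ∑' k : ℕ, (k:ℝ) * s ^ k * G k :=
    tsum_congr fun k => by ring
  rw [hQ1eq, hQ0eq]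
  field_simp
end

section
/- Under the same hypotheses (G(k) ~ (c_α/(α+1)) k^{α+1}, α > -1), the variance of ν_{s*(K)} satisfies Var_{ν_{s*(K)}}(X) = Q_2(s*(K))/Q_0(s*(K)) − K² ~ K²/(α+2) as K → ∞. -/
open Filter

open Finset Topology Nat

set_option maxHeartbeats 1000000

noncomputable def bb (β : ℝ) (k : ℕ) : ℝ := ∏ j ∈ Finset.range k, (β + j + 1) / (j + 1)

lemma bb_zero (β : ℝ) : bb β 0 = 1 := by simp [bb]

lemma bb_succ (β : ℝ) (k : ℕ) : bb β (k + 1) = bb β k * ((β + k + 1) / (k + 1)) := by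
  simp only [bb, Finset.prod_range_succ]

lemma bb_pos {β : ℝ} (hβ : -1 < β) (k : ℕ) : 0 < bb β k := by
  apply Finset.prod_pos
  intro j _
  have h1 : (0:ℝ) < j + 1 := by positivity
  have h2 : (0:ℝ) < β + j + 1 := by nlinarith [Nat.cast_nonneg (α := ℝ) j]
  positivity

lemma bb_ge_one {β : ℝ} (hβ : 0 < β) (k : ℕ) : 1 ≤ bb β k := by
  unfold bb
  calc (1:ℝ) = ∏ _j ∈ Finset.range k, 1 := by simp
    _ ≤ ∏ j ∈ Finset.range k, (β + j + 1) / (j + 1) := by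
        apply Finset.prod_le_prod (fun j _ => by norm_num)
        intro j _
        rw [le_div_iff₀ (by positivity : (0:ℝ) < (j:ℝ) + 1)]
        linarith

lemma bb_shift {β : ℝ} (hβ : -1 < β) (k : ℕ) :
    bb (β + 1) k = bb β k * ((β + k + 1) / (β + 1)) := by
  have hβ1 : (β : ℝ) + 1 ≠ 0 := by linarith
  induction k with
  | zero => simp [bb_zero]; field_simp
  | succ k ih =>
    have hk1 : ((k : ℝ) + 1) ≠ 0 := by positivity
    have hbk1 : (β + k + 1) ≠ 0 := by nlinarith [Nat.cast_nonneg (α := ℝ) k]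
    rw [bb_succ, ih, bb_succ]
    field_simp
    push_cast; ring

lemma bb_diff {β : ℝ} (hβ : -1 < β) (k : ℕ) :
    bb (β + 1) (k + 1) - bb (β + 1) k = bb β (k + 1) := by
  have hk1 : ((k : ℝ) + 1) ≠ 0 := by positivity
  have hβ1 : (β : ℝ) + 1 ≠ 0 := by linarith
  rw [bb_succ (β+1) k, bb_shift hβ, bb_succ β k]
  have hbk1 : (β + (k:ℝ) + 1) ≠ 0 := by nlinarith [Nat.cast_nonneg (α := ℝ) k]
  field_simp
  ring

lemma bb_mul_factorial (β : ℝ) (n : ℕ) :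
    bb β n * (n ! : ℝ) = ∏ j ∈ Finset.range n, (β + j + 1) := by
  induction n with
  | zero => simp [bb_zero]
  | succ n ih =>
    rw [bb_succ, Finset.prod_range_succ, ← ih, Nat.factorial_succ]
    have : ((n:ℝ) + 1) ≠ 0 := by positivity
    push_cast
    field_simp

lemma bb_tendsto {β : ℝ} (hβ : 0 < β) :
    Tendsto (fun k : ℕ => (k : ℝ) ^ β / bb β k) atTop (𝓝 (Real.Gamma (β + 1))) := by
  have h := (Real.GammaSeq_tendsto_Gamma β).const_mul β
  rw [show β * Real.Gamma β = Real.Gamma (β+1) by rw [Real.Gamma_add_one hβ.ne']] at h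
  apply h.congr
  intro n
  have hfac : ((n ! : ℝ)) ≠ 0 := by positivity
  have hbb : bb β n ≠ 0 := (bb_pos (by linarith) n).ne'
  rw [Real.GammaSeq, Finset.prod_range_succ']
  have hp : ∏ j ∈ Finset.range n, (β + ↑(j + 1)) = bb β n * n ! := by
    rw [bb_mul_factorial]
    exact Finset.prod_congr rfl fun j _ => by push_cast; ring
  rw [hp, Nat.cast_zero, add_zero]
  field_simp

lemma bb_summable {β : ℝ} (hβ : -1 < β) {s : ℝ} (hs0 : 0 < s) (hs1 : s < 1) :
    Summable (fun k : ℕ => bb β k * s ^ k) := by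
  apply summable_of_ratio_test_tendsto_lt_one hs1
  · filter_upwards with n
    exact (mul_pos (bb_pos hβ n) (pow_pos hs0 n)).ne'
  · have h1 : Tendsto (fun n : ℕ => ((β + n + 1) / (n + 1)) * s) atTop (𝓝 s) := by
      have h2 : Tendsto (fun n : ℕ => (β + n + 1) / (n + 1)) atTop (𝓝 1) := by
        have h3 : Tendsto (fun n : ℕ => ((n:ℝ) + 1)) atTop atTop :=
          tendsto_atTop_add_const_right _ 1 tendsto_natCast_atTop_atTop
        have h4 : Tendsto (fun n : ℕ => β / ((n:ℝ) + 1)) atTop (𝓝 0) :=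
          Tendsto.div_atTop tendsto_const_nhds h3
        have h5 := h4.add_const 1
        rw [zero_add] at h5
        apply h5.congr
        intro n
        have : ((n:ℝ) + 1) ≠ 0 := by positivity
        field_simp
        ring
      simpa using h2.mul_const s
    apply h1.congr
    intro n
    have hb := bb_pos hβ n
    have hb1 := bb_pos hβ (n + 1)
    have hsp := pow_pos hs0 n
    rw [Real.norm_eq_abs, Real.norm_eq_abs, abs_of_pos (mul_pos hb1 (pow_pos hs0 _)),
      abs_of_pos (mul_pos hb (pow_pos hs0 _)), bb_succ, pow_succ]
    field_simp

lemma mem_Ioo_eventually : ∀ᶠ s in 𝓝[<] (1:ℝ), s ∈ Set.Ioo (0:ℝ) 1 := by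
  have h1 : ∀ᶠ s in 𝓝[<] (1:ℝ), s ∈ Set.Iio (1:ℝ) := eventually_mem_nhdsWithin
  have h2 : ∀ᶠ s in 𝓝 (1:ℝ), (0:ℝ) < s := eventually_gt_nhds (by norm_num)
  filter_upwards [h1, eventually_nhdsWithin_of_eventually_nhds h2] with s hs1 hs0
  exact ⟨hs0, hs1⟩

lemma bb_div {β : ℝ} (hβ : 0 < β) :
    Tendsto (fun s : ℝ => ∑' k : ℕ, bb β k * s ^ k) (𝓝[<] (1:ℝ)) atTop := by
  have hinv : Tendsto (fun s : ℝ => (1 - s)⁻¹) (𝓝[<] (1:ℝ)) atTop := by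
    apply tendsto_inv_nhdsGT_zero.comp
    rw [tendsto_nhdsWithin_iff]
    constructor
    · have : Tendsto (fun s : ℝ => 1 - s) (𝓝 (1:ℝ)) (𝓝 (1 - 1)) :=
        (continuous_const.sub continuous_id).tendsto 1
      rw [sub_self] at this
      exact this.mono_left nhdsWithin_le_nhds
    · filter_upwards [eventually_mem_nhdsWithin] with s (hs : s < 1)
      simpa using hs
  apply tendsto_atTop_mono' _ _ hinv
  filter_upwards [mem_Ioo_eventually] with s hs
  rw [← tsum_geometric_of_lt_one hs.1.le hs.2]
  exact Summable.tsum_le_tsum (fun k => by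
      nlinarith [bb_ge_one hβ k, pow_pos hs.1 k, pow_nonneg hs.1.le k])
    (summable_geometric_of_lt_one hs.1.le hs.2) (bb_summable (by linarith) hs.1 hs.2)

lemma bb_step {β : ℝ} (hβ : -1 < β) {s : ℝ} (hs0 : 0 < s) (hs1 : s < 1) :
    (1 - s) * ∑' k : ℕ, bb (β + 1) k * s ^ k = ∑' k : ℕ, bb β k * s ^ k := by
  have hβ1 : (-1:ℝ) < β + 1 := by linarith
  have hsum1 : Summable (fun k : ℕ => bb (β + 1) k * s ^ k) := bb_summable hβ1 hs0 hs1
  have hsum0 : Summable (fun k : ℕ => bb β k * s ^ k) := bb_summable hβ hs0 hs1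
  have hshift : Summable (fun k : ℕ => bb (β + 1) (k + 1) * s ^ (k + 1)) :=
    (summable_nat_add_iff 1).2 hsum1
  have hmul : Summable (fun k : ℕ => bb (β + 1) k * s ^ (k + 1)) := by
    apply (hsum1.mul_left s).congr
    intro k; rw [pow_succ]; ring
  have e1 : s * ∑' k : ℕ, bb (β + 1) k * s ^ k = ∑' k : ℕ, bb (β + 1) k * s ^ (k + 1) := by
    rw [← tsum_mul_left]
    exact tsum_congr fun k => by rw [pow_succ]; ring
  have e2 : ∑' k : ℕ, bb (β + 1) k * s ^ k
      = bb (β + 1) 0 * s ^ 0 + ∑' k : ℕ, bb (β + 1) (k + 1) * s ^ (k + 1) :=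
    Summable.tsum_eq_zero_add hsum1
  have e3 : ∑' k : ℕ, bb β k * s ^ k
      = bb β 0 * s ^ 0 + ∑' k : ℕ, bb β (k + 1) * s ^ (k + 1) :=
    Summable.tsum_eq_zero_add hsum0
  rw [sub_mul, one_mul, e1, e2, e3, bb_zero, bb_zero]
  rw [add_sub_assoc, ← Summable.tsum_sub hshift hmul]
  congr 1
  apply tsum_congr
  intro k
  rw [← sub_mul, bb_diff hβ]

lemma abel_ratio {a b : ℕ → ℝ} {C : ℝ} (hb : ∀ k, 0 < b k)
    (hab : Tendsto (fun k => a k / b k) atTop (𝓝 C))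
    (hsum : ∀ s : ℝ, 0 < s → s < 1 → Summable (fun k : ℕ => b k * s ^ k))
    (hdiv : Tendsto (fun s : ℝ => ∑' k : ℕ, b k * s ^ k) (𝓝[<] (1:ℝ)) atTop) :
    Tendsto (fun s : ℝ => (∑' k : ℕ, a k * s ^ k) / (∑' k : ℕ, b k * s ^ k))
      (𝓝[<] (1:ℝ)) (𝓝 C) := by
  rw [Metric.tendsto_nhds]
  intro ε hε
  have hε2 : 0 < ε / 2 := by linarith
  obtain ⟨N, hN⟩ := (Metric.tendsto_atTop.1 hab) (ε / 2) hε2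
  have hNle : ∀ k, N ≤ k → |a k - C * b k| ≤ ε / 2 * b k := by
    intro k hk
    have h1 : dist (a k / b k) C ≤ ε / 2 := (hN k hk).le
    have h2 : a k / b k - C = (a k - C * b k) / b k := by
      rw [sub_div, mul_div_assoc, div_self (hb k).ne', mul_one]
    rw [Real.dist_eq, h2, abs_div, abs_of_pos (hb k), div_le_iff₀ (hb k)] at h1
    linarith
  set M : ℝ := ∑ k ∈ Finset.range N, |a k - C * b k| with hM
  have hM0 : 0 ≤ M := Finset.sum_nonneg fun k _ => abs_nonneg _
  set T : ℝ := max 1 (2 * M / ε) with hT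
  filter_upwards [mem_Ioo_eventually, hdiv.eventually_gt_atTop T] with s hs hBs
  set Bs : ℝ := ∑' k : ℕ, b k * s ^ k with hBsdef
  have hBpos : 0 < Bs := lt_of_lt_of_le one_pos ((le_max_left _ _).trans hBs.le)
  have hsb : Summable (fun k : ℕ => b k * s ^ k) := hsum s hs.1 hs.2
  have hsa : Summable (fun k : ℕ => a k * s ^ k) := by
    apply summable_of_isBigO_nat hsb
    apply Asymptotics.isBigO_of_div_tendsto_nhds
      (Eventually.of_forall fun k h =>
        absurd h (mul_ne_zero (hb k).ne' (pow_ne_zero k hs.1.ne')))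
      C
    apply hab.congr
    intro k
    rw [Pi.div_apply, mul_div_mul_right _ _ (pow_ne_zero k hs.1.ne')]
  have hd : Summable (fun k : ℕ => (a k - C * b k) * s ^ k) := by
    apply (hsa.sub (hsb.mul_left C)).congr
    intro k; ring
  have hdabs : Summable (fun k : ℕ => |(a k - C * b k) * s ^ k|) := hd.abs
  have hkey : (∑' k : ℕ, a k * s ^ k) - C * Bs = ∑' k : ℕ, (a k - C * b k) * s ^ k := by
    rw [hBsdef, ← tsum_mul_left, ← Summable.tsum_sub hsa (hsb.mul_left C)]
    exact tsum_congr fun k => by ring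
  have hfin : ∑ k ∈ Finset.range N, |(a k - C * b k) * s ^ k| ≤ M := by
    apply Finset.sum_le_sum
    intro k _
    rw [abs_mul]
    apply mul_le_of_le_one_right (abs_nonneg _)
    rw [abs_pow, abs_of_pos hs.1]
    exact pow_le_one₀ hs.1.le hs.2.le
  have htail : ∑' i : ℕ, |(a (i + N) - C * b (i + N)) * s ^ (i + N)| ≤ ε / 2 * Bs := by
    have hsbtail : Summable (fun i : ℕ => ε / 2 * (b (i + N) * s ^ (i + N))) :=
      ((summable_nat_add_iff (f := fun k : ℕ => b k * s ^ k) N).2 hsb).mul_left (ε / 2)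
    have h1 : ∑' i : ℕ, |(a (i + N) - C * b (i + N)) * s ^ (i + N)|
        ≤ ∑' i : ℕ, ε / 2 * (b (i + N) * s ^ (i + N))  := by
      apply Summable.tsum_le_tsum _ ((summable_nat_add_iff (f := fun k : ℕ => |(a k - C * b k) * s ^ k|) N).2 hdabs) hsbtail
      intro i
      rw [abs_mul, abs_pow, abs_of_pos hs.1, ← mul_assoc]
      exact mul_le_mul_of_nonneg_right (hNle _ (Nat.le_add_left N i))
        (pow_nonneg hs.1.le _)
    have h2 : ∑' i : ℕ, ε / 2 * (b (i + N) * s ^ (i + N)) ≤ ε / 2 * Bs := by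
      rw [tsum_mul_left]
      apply mul_le_mul_of_nonneg_left _ hε2.le
      have hsplit := Summable.sum_add_tsum_nat_add (f := fun k : ℕ => b k * s ^ k) N hsb
      have hfin0 : 0 ≤ ∑ k ∈ Finset.range N, b k * s ^ k :=
        Finset.sum_nonneg fun k _ => (mul_pos (hb k) (pow_pos hs.1 k)).le
      rw [hBsdef]
      linarith [hsplit]
    linarith
  have habs : |∑' k : ℕ, (a k - C * b k) * s ^ k| ≤ M + ε / 2 * Bs := by
    have h1 : |∑' k : ℕ, (a k - C * b k) * s ^ k|
        ≤ ∑' k : ℕ, |(a k - C * b k) * s ^ k| := by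
      have := norm_tsum_le_tsum_norm (f := fun k : ℕ => (a k - C * b k) * s ^ k) hdabs
      simpa only [Real.norm_eq_abs] using this
    have hsplit := Summable.sum_add_tsum_nat_add
      (f := fun k : ℕ => |(a k - C * b k) * s ^ k|) N hdabs
    linarith
  rw [Real.dist_eq]
  have hAs : (∑' k : ℕ, a k * s ^ k) / Bs - C = ((∑' k : ℕ, a k * s ^ k) - C * Bs) / Bs := by
    field_simp
  rw [hAs, hkey, abs_div, abs_of_pos hBpos, div_lt_iff₀ hBpos]
  have hTBs : 2 * M / ε < Bs := lt_of_le_of_lt (le_max_right _ _) hBs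
  have hMlt : M < ε / 2 * Bs := by
    rw [div_lt_iff₀ hε] at hTBs
    nlinarith
  calc |∑' k : ℕ, (a k - C * b k) * s ^ k| ≤ M + ε / 2 * Bs := habs
    _ < ε / 2 * Bs + ε / 2 * Bs := by linarith
    _ = ε * Bs := by ring

section main

variable {α c : ℝ} {G : ℕ → ℝ}

lemma coeff_tendsto (hα : -1 < α) (hGpos : ∀ k, 0 < G k)
    (hG : Tendsto (fun k : ℕ => G k / (k : ℝ) ^ (α + 1)) atTop (𝓝 (c / (α + 1))))
    (n : ℕ) (β : ℝ) (hβ : β = α + 1 + n) :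
    Tendsto (fun k : ℕ => ((k:ℝ) ^ n * G k) / bb β k) atTop
      (𝓝 (c / (α + 1) * Real.Gamma (β + 1))) := by
  have hβ0 : (0:ℝ) < β := by
    rw [hβ]; have : (0:ℝ) ≤ n := Nat.cast_nonneg n; linarith
  have h := hG.mul (bb_tendsto hβ0)
  apply h.congr'
  filter_upwards [eventually_ge_atTop 1] with k hk
  have hk0 : (0:ℝ) < k := by exact_mod_cast hk
  have hbb : bb β k ≠ 0 := (bb_pos (by linarith) k).ne'
  have hx : (k:ℝ) ^ (α + 1) ≠ 0 := (Real.rpow_pos_of_pos hk0 _).ne'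
  have hrp : (k:ℝ) ^ β = (k:ℝ) ^ (α + 1) * (k:ℝ) ^ n := by
    rw [hβ, Real.rpow_add hk0, Real.rpow_natCast]
  rw [hrp]
  field_simp

lemma Qsummable (hα : -1 < α) (hGpos : ∀ k, 0 < G k)
    (hG : Tendsto (fun k : ℕ => G k / (k : ℝ) ^ (α + 1)) atTop (𝓝 (c / (α + 1))))
    (n : ℕ) {s : ℝ} (hs0 : 0 < s) (hs1 : s < 1) :
    Summable (fun k : ℕ => (k:ℝ) ^ n * s ^ k * G k) := by
  have hβ : (-1:ℝ) < α + 1 + n := by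
    have : (0:ℝ) ≤ n := Nat.cast_nonneg n; linarith
  have hb := bb_summable hβ hs0 hs1
  apply summable_of_isBigO_nat hb
  apply Asymptotics.isBigO_of_div_tendsto_nhds
    (Eventually.of_forall fun k h =>
      absurd h (mul_ne_zero (bb_pos hβ k).ne' (pow_ne_zero k hs0.ne')))
    (c / (α + 1) * Real.Gamma (α + 1 + n + 1))
  apply (coeff_tendsto hα hGpos hG n _ rfl).congr
  intro k
  rw [Pi.div_apply, show (k:ℝ) ^ n * s ^ k * G k = ((k:ℝ) ^ n * G k) * s ^ k by ring,
    mul_div_mul_right _ _ (pow_ne_zero k hs0.ne')]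

lemma Qtendsto (hα : -1 < α) (hGpos : ∀ k, 0 < G k)
    (hG : Tendsto (fun k : ℕ => G k / (k : ℝ) ^ (α + 1)) atTop (𝓝 (c / (α + 1))))
    (n : ℕ) (β : ℝ) (hβ : β = α + 1 + n) :
    Tendsto (fun s : ℝ => (∑' k : ℕ, (k:ℝ) ^ n * s ^ k * G k) / (∑' k : ℕ, bb β k * s ^ k))
      (𝓝[<] (1:ℝ)) (𝓝 (c / (α + 1) * Real.Gamma (β + 1))) := by
  have hβ0 : (0:ℝ) < β := by
    rw [hβ]; have : (0:ℝ) ≤ n := Nat.cast_nonneg n; linarith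
  have hβ1 : (-1:ℝ) < β := by linarith
  have h := abel_ratio (a := fun k : ℕ => (k:ℝ) ^ n * G k) (b := bb β)
    (bb_pos hβ1) (coeff_tendsto hα hGpos hG n β hβ)
    (fun s h0 h1 => bb_summable hβ1 h0 h1) (bb_div hβ0)
  apply h.congr
  intro s
  congr 1
  exact tsum_congr fun k => by ring

end main

lemma key_lemma {α c : ℝ} {G : ℕ → ℝ} (hα : -1 < α) (hc : 0 < c) (hGpos : ∀ k, 0 < G k)
    (hG : Tendsto (fun k : ℕ => G k / (k : ℝ) ^ (α + 1)) atTop (𝓝 (c / (α + 1)))) :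
    Tendsto (fun s : ℝ =>
        (∑' k : ℕ, (k:ℝ) ^ 2 * s ^ k * G k) * (∑' k : ℕ, s ^ k * G k)
          / (∑' k : ℕ, (k:ℝ) * s ^ k * G k) ^ 2)
      (𝓝[<] (1:ℝ)) (𝓝 ((α + 3) / (α + 2))) := by
  set L : ℝ := c / (α + 1) with hL
  have hLpos : 0 < L := div_pos hc (by linarith)
  have hΓ2pos : 0 < Real.Gamma (α + 2) := Real.Gamma_pos_of_pos (by linarith)
  have hΓ3pos : 0 < Real.Gamma (α + 3) := Real.Gamma_pos_of_pos (by linarith)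
  have h0 : Tendsto (fun s : ℝ =>
      (∑' k : ℕ, s ^ k * G k) / (∑' k : ℕ, bb (α + 1) k * s ^ k))
      (𝓝[<] (1:ℝ)) (𝓝 (L * Real.Gamma (α + 2))) := by
    have h := Qtendsto hα hGpos hG 0 (α + 1) (by push_cast; ring)
    rw [show α + 1 + 1 = α + 2 by ring] at h
    apply h.congr
    intro s
    congr 1
    exact tsum_congr fun k => by norm_num
  have h1 : Tendsto (fun s : ℝ =>
      (∑' k : ℕ, (k:ℝ) * s ^ k * G k) / (∑' k : ℕ, bb (α + 2) k * s ^ k))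
      (𝓝[<] (1:ℝ)) (𝓝 (L * Real.Gamma (α + 3))) := by
    have h := Qtendsto hα hGpos hG 1 (α + 2) (by push_cast; ring)
    rw [show α + 2 + 1 = α + 3 by ring] at h
    apply h.congr
    intro s
    congr 1
    exact tsum_congr fun k => by norm_num
  have h2 : Tendsto (fun s : ℝ =>
      (∑' k : ℕ, (k:ℝ) ^ 2 * s ^ k * G k) / (∑' k : ℕ, bb (α + 3) k * s ^ k))
      (𝓝[<] (1:ℝ)) (𝓝 (L * Real.Gamma (α + 4))) := by
    have h := Qtendsto hα hGpos hG 2 (α + 3) (by push_cast; ring)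
    rw [show α + 3 + 1 = α + 4 by ring] at h
    exact h
  have hden : (L * Real.Gamma (α + 3)) ^ 2 ≠ 0 := by positivity
  have hcomb := ((h2.mul h0).div (h1.pow 2) hden)
  have hval : L * Real.Gamma (α + 4) * (L * Real.Gamma (α + 2))
      / (L * Real.Gamma (α + 3)) ^ 2 = (α + 3) / (α + 2) := by
    rw [show α + 4 = (α + 3) + 1 by ring, Real.Gamma_add_one (by linarith : α + 3 ≠ 0),
      show α + 3 = (α + 2) + 1 by ring, Real.Gamma_add_one (by linarith : α + 2 ≠ 0)]
    have h22 : α + 2 ≠ 0 := by linarith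
    field_simp
  rw [hval] at hcomb
  apply hcomb.congr'
  filter_upwards [mem_Ioo_eventually] with s hs
  set Q0 : ℝ := ∑' k : ℕ, s ^ k * G k
  set Q1 : ℝ := ∑' k : ℕ, (k:ℝ) * s ^ k * G k
  set Q2 : ℝ := ∑' k : ℕ, (k:ℝ) ^ 2 * s ^ k * G k
  set B1 : ℝ := ∑' k : ℕ, bb (α + 1) k * s ^ k
  set B2 : ℝ := ∑' k : ℕ, bb (α + 2) k * s ^ k
  set B3 : ℝ := ∑' k : ℕ, bb (α + 3) k * s ^ k
  have hB1pos : 0 < B1 :=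
    Summable.tsum_pos (bb_summable (by linarith) hs.1 hs.2)
      (fun k => (mul_pos (bb_pos (by linarith) k) (pow_pos hs.1 k)).le) 0
      (by rw [bb_zero]; simpa using one_pos)
  have hB2pos : 0 < B2 :=
    Summable.tsum_pos (bb_summable (by linarith) hs.1 hs.2)
      (fun k => (mul_pos (bb_pos (by linarith) k) (pow_pos hs.1 k)).le) 0
      (by rw [bb_zero]; simpa using one_pos)
  have hB3pos : 0 < B3 :=
    Summable.tsum_pos (bb_summable (by linarith) hs.1 hs.2)
      (fun k => (mul_pos (bb_pos (by linarith) k) (pow_pos hs.1 k)).le) 0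
      (by rw [bb_zero]; simpa using one_pos)
  have e1 : (1 - s) * B2 = B1 := by
    have := bb_step (β := α + 1) (by linarith) hs.1 hs.2
    rw [show α + 1 + 1 = α + 2 by ring] at this
    exact this
  have e2 : (1 - s) * B3 = B2 := by
    have := bb_step (β := α + 2) (by linarith) hs.1 hs.2
    rw [show α + 2 + 1 = α + 3 by ring] at this
    exact this
  have hB : B1 * B3 = B2 ^ 2 := by rw [← e1, ← e2]; ring
  have hsum1 : Summable (fun k : ℕ => (k:ℝ) * s ^ k * G k) :=
    (Qsummable hα hGpos hG 1 hs.1 hs.2).congr (fun k => by norm_num)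
  have hQ1pos : 0 < Q1 :=
    Summable.tsum_pos hsum1
      (fun k => mul_nonneg (mul_nonneg (Nat.cast_nonneg k) (pow_pos hs.1 k).le) (hGpos k).le)
      1 (by push_cast; nlinarith [hGpos 1, hs.1])
  show Q2 / B3 * (Q0 / B1) / (Q1 / B2) ^ 2 = Q2 * Q0 / Q1 ^ 2
  rw [div_pow, ← hB]
  field_simp


/-- Under `G(k) ~ (c/(α+1)) k^{α+1}` with `α > -1`, `c > 0`, the variance
of the tilted measure `ν_{s*(K)}` (with mean `K`) satisfies
`Var = Q₂(s*(K))/Q₀(s*(K)) − K² ~ K²/(α+2)` as `K → ∞`. -/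
theorem stmt9 (α c : ℝ) (hα : -1 < α) (hc : 0 < c) (G : ℕ → ℝ) (hGpos : ∀ k, 0 < G k)
    (hG : Tendsto (fun k : ℕ => G k / (k : ℝ) ^ (α + 1)) atTop (nhds (c / (α + 1))))
    (sStar : ℝ → ℝ)
    (hsStar : ∀ K : ℝ, 0 < K → sStar K ∈ Set.Ioo (0 : ℝ) 1 ∧
      (∑' k : ℕ, (k : ℝ) * (sStar K) ^ k * G k) / (∑' k : ℕ, (sStar K) ^ k * G k) = K) :
    Tendsto (fun K : ℝ =>
      ((∑' k : ℕ, (k : ℝ) ^ 2 * (sStar K) ^ k * G k)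
          / (∑' k : ℕ, (sStar K) ^ k * G k) - K ^ 2) / K ^ 2)
      atTop (nhds (1 / (α + 2))) := by
  have hS : Tendsto sStar atTop (𝓝[<] (1:ℝ)) := by
    rw [tendsto_nhdsWithin_iff]
    constructor
    · rw [Metric.tendsto_nhds]
      intro ε hε
      set t : ℝ := max (1 - ε) (1/2) with htdef
      have ht0 : 0 < t := lt_of_lt_of_le (by norm_num) (le_max_right _ _)
      have ht1 : t < 1 := max_lt (by linarith) (by norm_num)
      have hsumQ1t : Summable (fun k : ℕ => (k:ℝ) * t ^ k * G k) :=
        (Qsummable hα hGpos hG 1 ht0 ht1).congr (fun k => by norm_num)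
      set Mt : ℝ := (∑' k : ℕ, (k:ℝ) * t ^ k * G k) / G 0 with hMtdef
      filter_upwards [eventually_gt_atTop (max 0 Mt)] with K hK
      have hK0 : 0 < K := lt_of_le_of_lt (le_max_left _ _) hK
      obtain ⟨hmem, hmean⟩ := hsStar K hK0
      have hlt : t < sStar K := by
        by_contra hle
        push_neg at hle
        have hs0 : 0 < sStar K := hmem.1
        have hs1 : sStar K < 1 := hmem.2
        have hQ1s : Summable (fun k : ℕ => (k:ℝ) * (sStar K) ^ k * G k) :=
          (Qsummable hα hGpos hG 1 hs0 hs1).congr (fun k => by norm_num)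
        have hQ0s : Summable (fun k : ℕ => (sStar K) ^ k * G k) :=
          (Qsummable hα hGpos hG 0 hs0 hs1).congr (fun k => by norm_num)
        have hQ0ge : G 0 ≤ ∑' k : ℕ, (sStar K) ^ k * G k := by
          have := Summable.le_tsum hQ0s 0
            (fun k _ => mul_nonneg (pow_pos hs0 k).le (hGpos k).le)
          simpa using this
        have hQ1le : ∑' k : ℕ, (k:ℝ) * (sStar K) ^ k * G k
            ≤ ∑' k : ℕ, (k:ℝ) * t ^ k * G k := by
          apply Summable.tsum_le_tsum _ hQ1s hsumQ1t
          intro k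
          have hp : (sStar K) ^ k ≤ t ^ k := pow_le_pow_left₀ hs0.le hle k
          have := mul_le_mul_of_nonneg_left hp (Nat.cast_nonneg (α := ℝ) k)
          exact mul_le_mul_of_nonneg_right this (hGpos k).le
        have hQ1nonneg : 0 ≤ ∑' k : ℕ, (k:ℝ) * t ^ k * G k :=
          tsum_nonneg fun k =>
            mul_nonneg (mul_nonneg (Nat.cast_nonneg k) (pow_pos ht0 k).le) (hGpos k).le
        have hKle : K ≤ Mt := by
          rw [← hmean, hMtdef]
          exact div_le_div₀ hQ1nonneg hQ1le (hGpos 0) hQ0ge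
        have := lt_of_le_of_lt (le_max_right 0 Mt) hK
        linarith
      rw [Real.dist_eq, abs_of_nonpos (by linarith [hmem.2] : sStar K - 1 ≤ 0)]
      have hte : 1 - ε ≤ t := le_max_left _ _
      linarith
    · filter_upwards [eventually_gt_atTop 0] with K hK
      exact Set.mem_Iio.2 (hsStar K hK).1.2
  have hfinal := ((key_lemma hα hc hGpos hG).comp hS).sub_const 1
  have hval : (α + 3) / (α + 2) - 1 = 1 / (α + 2) := by
    have h2 : α + 2 ≠ 0 := by linarith
    field_simp
    norm_num
  rw [hval] at hfinal
  apply hfinal.congr'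
  filter_upwards [eventually_gt_atTop 0] with K hK
  obtain ⟨hmem, hmean⟩ := hsStar K hK
  have hs0 : 0 < sStar K := hmem.1
  have hs1 : sStar K < 1 := hmem.2
  have hQ1s : Summable (fun k : ℕ => (k:ℝ) * (sStar K) ^ k * G k) :=
    (Qsummable hα hGpos hG 1 hs0 hs1).congr (fun k => by norm_num)
  have hQ0s : Summable (fun k : ℕ => (sStar K) ^ k * G k) :=
    (Qsummable hα hGpos hG 0 hs0 hs1).congr (fun k => by norm_num)
  have hQ0pos : 0 < ∑' k : ℕ, (sStar K) ^ k * G k :=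
    Summable.tsum_pos hQ0s (fun k => mul_nonneg (pow_pos hs0 k).le (hGpos k).le) 0
      (by simpa using (hGpos 0))
  have hQ1pos : 0 < ∑' k : ℕ, (k:ℝ) * (sStar K) ^ k * G k :=
    Summable.tsum_pos hQ1s
      (fun k => mul_nonneg (mul_nonneg (Nat.cast_nonneg k) (pow_pos hs0 k).le) (hGpos k).le)
      1 (by push_cast; nlinarith [hGpos 1, hs0])
  simp only [Function.comp_apply]
  set s := sStar K with hsdef
  set Q0 : ℝ := ∑' k : ℕ, s ^ k * G k
  set Q1 : ℝ := ∑' k : ℕ, (k:ℝ) * s ^ k * G k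
  set Q2 : ℝ := ∑' k : ℕ, (k:ℝ) ^ 2 * s ^ k * G k
  rw [← hmean]
  field_simp
end

section
/- Fix T > 0, α > -1, and a sequence a_N → ∞. Let s_N = 1 - (α+2)/(T a_N) and let f : ℝ → ℝ be bounded and continuous. Then (1/Q_0(s_N)) Σ_{k≥0} f(k/a_N) s_N^k G(k) → ∫_0^∞ f(r) · (1/Γ(α+2)) ((α+2)/T)^{α+2} r^{α+1} e^{-(α+2)r/T} dr as N → ∞, provided G(k) ~ (c_α/(α+1)) k^{α+1} as k → ∞ for some c_α > 0 and Q_0(s) = Σ_k s^k G(k). -/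
open Filter
open MeasureTheory Set
open scoped ENNReal NNReal

lemma st11_union : (⋃ k : ℕ, Ico (k:ℝ) (k+1)) = Ici 0 := by
  ext x
  simp only [mem_iUnion, mem_Ico, mem_Ici]
  constructor
  · rintro ⟨k, hk, -⟩; exact le_trans (Nat.cast_nonneg k) hk
  · intro hx; exact ⟨⌊x⌋₊, Nat.floor_le hx, Nat.lt_floor_add_one x⟩

lemma st11_disj : Pairwise (Function.onFun Disjoint fun k : ℕ => Ico (k:ℝ) (k+1)) := by
  intro i j hij
  rcases hij.lt_or_gt with h | h
  · exact Set.Ico_disjoint_Ico.mpr (by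
      simp only [min_le_iff, le_max_iff]
      right; left
      exact_mod_cast Nat.succ_le_of_lt h)
  · exact Set.Ico_disjoint_Ico.mpr (by
      simp only [min_le_iff, le_max_iff]
      left; right
      exact_mod_cast Nat.succ_le_of_lt h)

lemma st11_meas (g : ℕ → ℝ) : Measurable (fun t : ℝ => g ⌊t⌋₊) :=
  measurable_from_top.comp Nat.measurable_floor

lemma st11_integrable {g : ℕ → ℝ} (hg : Summable fun k => |g k|) :
    IntegrableOn (fun t : ℝ => g ⌊t⌋₊) (Ici 0) := by
  refine ⟨(st11_meas g).aestronglyMeasurable, ?_⟩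
  rw [HasFiniteIntegral, ← st11_union,
    lintegral_iUnion (fun k => measurableSet_Ico) st11_disj]
  have h1 : ∀ k : ℕ, (∫⁻ t in Ico (k:ℝ) (k+1), ‖g ⌊t⌋₊‖₊) = (‖g k‖₊ : ℝ≥0∞) := by
    intro k
    rw [setLIntegral_congr_fun measurableSet_Ico
      (fun x hx => by rw [Nat.floor_eq_on_Ico k x hx]),
      setLIntegral_const, Real.volume_Ico]
    simp
  simp_rw [enorm_eq_nnnorm]
  simp_rw [h1]
  rw [lt_top_iff_ne_top]
  refine ENNReal.tsum_coe_ne_top_iff_summable.mpr ?_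
  refine NNReal.summable_coe.mp ?_
  simpa [Real.norm_eq_abs] using hg

lemma st11_integral {g : ℕ → ℝ} (hg : Summable fun k => |g k|) :
    (∫ t in Ioi (0:ℝ), g ⌊t⌋₊) = ∑' k, g k := by
  rw [← integral_Ici_eq_integral_Ioi, ← st11_union,
    integral_iUnion (fun k => measurableSet_Ico) st11_disj
      (st11_union ▸ st11_integrable hg)]
  congr 1
  funext k
  rw [setIntegral_congr_fun measurableSet_Ico
      (fun x hx => by rw [Nat.floor_eq_on_Ico k x hx]),
    setIntegral_const, Real.volume_real_Ico]
  simp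


-- summability of the series for 0 ≤ s < 1
lemma st11_summable {p s C : ℝ} (hp : 0 < p) (hs0 : 0 ≤ s) (hs1 : s < 1)
    {G : ℕ → ℝ} (hGpos : ∀ k, 0 < G k) (hC : ∀ k : ℕ, 1 ≤ k → G k ≤ C * (k:ℝ)^p)
    {φ : ℕ → ℝ} {M : ℝ} (hφ : ∀ k, |φ k| ≤ M) :
    Summable (fun k : ℕ => |φ k * s ^ k * G k|) := by
  have hM : 0 ≤ M := le_trans (abs_nonneg _) (hφ 0)
  have hC0 : 0 ≤ C := by
    have := (hGpos 1).le.trans (hC 1 le_rfl)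
    simpa using this
  set n : ℕ := ⌈p⌉₊
  have hbase : Summable (fun k : ℕ => (k:ℝ)^n * s^k) :=
    summable_pow_mul_geometric_of_norm_lt_one n (by rwa [Real.norm_eq_abs, abs_of_nonneg hs0])
  have hmaj : Summable (fun k : ℕ => M * C * ((k:ℝ)^n * s^k) + M * G 0 * s ^ k) := by
    exact ((hbase.mul_left _).add ((summable_geometric_of_lt_one hs0 hs1).mul_left _))
  refine Summable.of_nonneg_of_le (fun k => abs_nonneg _) (fun k => ?_) hmaj
  rcases Nat.eq_zero_or_pos k with rfl | hk
  · simp only [pow_zero, abs_mul, abs_one, mul_one]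
    have : |φ 0| * |G 0| ≤ M * G 0 := by
      rw [abs_of_pos (hGpos 0)]
      exact mul_le_mul_of_nonneg_right (hφ 0) (hGpos 0).le
    nlinarith [mul_nonneg (mul_nonneg hM hC0) (mul_nonneg (pow_nonneg (by norm_num : (0:ℝ) ≤ ((0:ℕ):ℝ)) n) (pow_nonneg hs0 0)), this
      , abs_mul (φ 0 * s ^ 0) (G 0)]
  · have h1 : (1:ℝ) ≤ (k:ℝ) := by exact_mod_cast hk
    have hkp : G k ≤ C * (k:ℝ)^n := by
      refine (hC k hk).trans (mul_le_mul_of_nonneg_left ?_ hC0)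
      rw [← Real.rpow_natCast (k:ℝ) n]
      exact Real.rpow_le_rpow_of_exponent_le h1 (Nat.le_ceil p)
    have habs : |φ k * s ^ k * G k| ≤ M * (s ^ k * (C * (k:ℝ)^n)) := by
      rw [abs_mul, abs_mul, abs_of_nonneg (pow_nonneg hs0 k), abs_of_pos (hGpos k)]
      have := mul_le_mul (mul_le_mul (hφ k) le_rfl (pow_nonneg hs0 k) hM) hkp (hGpos k).le
        (mul_nonneg hM (pow_nonneg hs0 k))
      calc |φ k| * s ^ k * G k ≤ M * s ^ k * (C * (k:ℝ)^n) := this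
        _ = M * (s ^ k * (C * (k:ℝ)^n)) := by ring
    refine habs.trans ?_
    have : (0:ℝ) ≤ M * G 0 * s ^ k :=
      mul_nonneg (mul_nonneg hM (hGpos 0).le) (pow_nonneg hs0 k)
    nlinarith


lemma st11_key {p β c M : ℝ} (hp : 0 < p) (hβ : 0 < β)
    {G : ℕ → ℝ} (hGpos : ∀ k, 0 < G k)
    (hG : Filter.Tendsto (fun k : ℕ => G k / (k:ℝ)^p) atTop (nhds c))
    {a : ℕ → ℝ} (ha : Filter.Tendsto a atTop atTop)
    {φ : ℝ → ℝ} (hφ : Continuous φ) (hφb : ∀ x, |φ x| ≤ M) :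
    Filter.Tendsto
      (fun N => (∑' k : ℕ, φ ((k:ℝ)/a N) * (1 - β / a N)^k * G k) / (a N)^(p+1))
      atTop (nhds (∫ t in Ioi (0:ℝ), φ t * Real.exp (-(β*t)) * (c * t^p))) := by
  have hM : 0 ≤ M := le_trans (abs_nonneg _) (hφb 0)
  -- a bound G k ≤ C k^p
  obtain ⟨C₀, hC₀⟩ := hG.bddAbove_range
  set C : ℝ := max C₀ 1 with hCdef
  have hC1 : (1:ℝ) ≤ C := le_max_right _ _
  have hC0 : (0:ℝ) ≤ C := le_trans zero_le_one hC1
  have hC : ∀ k : ℕ, 1 ≤ k → G k ≤ C * (k:ℝ)^p := by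
    intro k hk
    have hkpos : (0:ℝ) < (k:ℝ)^p :=
      Real.rpow_pos_of_pos (by exact_mod_cast hk) p
    have h1 : G k / (k:ℝ)^p ≤ C₀ := hC₀ ⟨k, rfl⟩
    have := (div_le_iff₀ hkpos).mp (h1.trans (le_max_left C₀ 1))
    linarith [this]
  -- the rescaled step functions
  set g : ℕ → ℕ → ℝ :=
    fun N k => φ ((k:ℝ)/a N) * (1 - β/a N)^k * G k / (a N)^p with hgdef
  set F : ℕ → ℝ → ℝ := fun N t => g N ⌊a N * t⌋₊ with hFdef
  set lim : ℝ → ℝ := fun t => φ t * Real.exp (-(β*t)) * (c * t^p) with hlimdef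
  set bound : ℝ → ℝ := fun t =>
    M * G 0 * Real.exp β * Real.exp (-(β*t))
      + M * C * Real.exp β * (t^p * Real.exp (-(β*t))) with hbdef
  have hev : ∀ᶠ N in atTop, max 1 β < a N := ha.eventually_gt_atTop _
  -- measurability
  have hmeas : ∀ N, AEStronglyMeasurable (F N) (volume.restrict (Ioi (0:ℝ))) := by
    intro N
    have h1 : Measurable fun t : ℝ => a N * t := measurable_id.const_mul (a N)
    have h2 : Measurable fun t : ℝ => g N ⌊a N * t⌋₊ :=
      Measurable.comp (measurable_from_top (f := g N)) (Nat.measurable_floor.comp h1)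
    exact h2.aestronglyMeasurable
  -- domination
  have hbound : ∀ᶠ N in atTop, ∀ᵐ t ∂(volume.restrict (Ioi (0:ℝ))),
      ‖F N t‖ ≤ bound t := by
    filter_upwards [hev] with N hN
    have ha1 : (1:ℝ) ≤ a N := le_of_lt (lt_of_le_of_lt (le_max_left _ _) hN)
    have haβ : β < a N := lt_of_le_of_lt (le_max_right _ _) hN
    have ha0 : (0:ℝ) < a N := lt_of_lt_of_le zero_lt_one ha1
    have hap1 : (1:ℝ) ≤ (a N)^p := by
      calc (1:ℝ) = 1^p := (Real.one_rpow p).symm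
      _ ≤ (a N)^p := Real.rpow_le_rpow zero_le_one ha1 hp.le
    have hap0 : (0:ℝ) < (a N)^p := lt_of_lt_of_le zero_lt_one hap1
    set s : ℝ := 1 - β / a N with hsdef
    have hs0 : 0 ≤ s := by
      have : β / a N ≤ 1 := (div_le_one ha0).mpr haβ.le
      simp [hsdef]; linarith
    have hskey : ∀ t : ℝ, 0 < t → s ^ ⌊a N * t⌋₊ ≤ Real.exp β * Real.exp (-(β*t)) := by
      intro t ht
      have h1 : s ≤ Real.exp (-(β / a N)) := by
        have := Real.add_one_le_exp (-(β / a N))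
        simp [hsdef]; linarith
      have h2 : s ^ ⌊a N * t⌋₊ ≤ Real.exp (-(β / a N)) ^ ⌊a N * t⌋₊ :=
        pow_le_pow_left₀ hs0 h1 _
      have h3 : Real.exp (-(β / a N)) ^ ⌊a N * t⌋₊
          = Real.exp (-(β / a N) * ⌊a N * t⌋₊) := by
        rw [← Real.exp_nat_mul]; ring_nf
      have h4 : -(β / a N) * (⌊a N * t⌋₊ : ℝ) ≤ β - β * t := by
        have hfl : a N * t - 1 < (⌊a N * t⌋₊ : ℝ) := by
          have := Nat.lt_floor_add_one (a N * t); linarith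
        have hβa : 0 < β / a N := div_pos hβ ha0
        have : (β / a N) * (a N * t - 1) ≤ (β / a N) * (⌊a N * t⌋₊ : ℝ) :=
          mul_le_mul_of_nonneg_left hfl.le hβa.le
        have hexp : (β / a N) * (a N * t - 1) = β * t - β / a N := by
          field_simp
        have : β * t - β / a N ≤ (β / a N) * (⌊a N * t⌋₊ : ℝ) := by
          rw [← hexp]; exact this
        have hβle : β / a N ≤ β := by
          rw [div_le_iff₀ ha0]; nlinarith
        nlinarith
      calc s ^ ⌊a N * t⌋₊ ≤ Real.exp (-(β / a N) * ⌊a N * t⌋₊) := by rw [← h3]; exact h2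
        _ ≤ Real.exp (β - β * t) := Real.exp_le_exp.mpr h4
        _ = Real.exp β * Real.exp (-(β*t)) := by rw [← Real.exp_add]; ring_nf
    rw [ae_restrict_iff' measurableSet_Ioi]
    refine ae_of_all _ (fun t ht => ?_)
    have ht : 0 < t := ht
    rcases Nat.eq_zero_or_pos ⌊a N * t⌋₊ with h0 | hk1
    · -- floor is zero : t < 1
      have ht1 : t < 1 := by
        have := (Nat.floor_eq_zero).mp h0
        nlinarith
      have hF : ‖F N t‖ ≤ M * G 0 := by
        simp only [hFdef, hgdef, h0, Real.norm_eq_abs]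
        rw [pow_zero, mul_one]
        rw [abs_div, abs_mul, abs_of_pos (hGpos 0), abs_of_pos hap0]
        rw [div_le_iff₀ hap0]
        calc |φ ((0:ℕ) / a N)| * G 0 ≤ M * G 0 :=
              mul_le_mul_of_nonneg_right (hφb _) (hGpos 0).le
          _ ≤ M * G 0 * (a N)^p := le_mul_of_one_le_right (mul_nonneg hM (hGpos 0).le) hap1
      have h1exp : 1 ≤ Real.exp β * Real.exp (-(β*t)) := by
        rw [← Real.exp_add, ← Real.exp_zero]
        exact Real.exp_le_exp.mpr (by nlinarith)
      have hb2 : 0 ≤ M * C * Real.exp β * (t^p * Real.exp (-(β*t))) := by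
        have := Real.rpow_nonneg ht.le p
        positivity
      have hG00 : (0:ℝ) ≤ M * G 0 := mul_nonneg hM (hGpos 0).le
      have hup : M * G 0 ≤ M * G 0 * (Real.exp β * Real.exp (-(β*t))) :=
        le_mul_of_one_le_right hG00 h1exp
      have heq : M * G 0 * (Real.exp β * Real.exp (-(β*t)))
          = M * G 0 * Real.exp β * Real.exp (-(β*t)) := by ring
      have hfinal : M * G 0 ≤ M * G 0 * Real.exp β * Real.exp (-(β*t)) := by
        rw [← heq]; exact hup
      show ‖F N t‖ ≤ M * G 0 * Real.exp β * Real.exp (-(β*t))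
          + M * C * Real.exp β * (t^p * Real.exp (-(β*t)))
      linarith
    · -- floor ≥ 1
      set k := ⌊a N * t⌋₊ with hkdef
      have hka : (k:ℝ) ≤ a N * t := Nat.floor_le (by positivity)
      have hkdiv : ((k:ℝ)/a N) ≤ t := by rw [div_le_iff₀ ha0]; linarith
      have hkp : ((k:ℝ)/a N)^p ≤ t^p :=
        Real.rpow_le_rpow (by positivity) hkdiv hp.le
      have hGk : G k ≤ C * (k:ℝ)^p := hC k hk1
      have hF : ‖F N t‖ ≤ M * (C * ((k:ℝ)/a N)^p) * s ^ k := by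
        simp only [hFdef, hgdef, Real.norm_eq_abs]
        rw [abs_div, abs_mul, abs_mul, abs_of_pos (hGpos k), abs_of_pos hap0,
          abs_of_nonneg (pow_nonneg hs0 k)]
        rw [div_le_iff₀ hap0]
        have hrw : ((k:ℝ)/a N)^p = (k:ℝ)^p / (a N)^p :=
          Real.div_rpow (Nat.cast_nonneg k) ha0.le p
        have hkpow0 : (0:ℝ) ≤ (k:ℝ)^p := Real.rpow_nonneg (Nat.cast_nonneg k) p
        calc |φ ((k:ℝ) / a N)| * s ^ k * G k ≤ M * s ^ k * (C * (k:ℝ)^p) := by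
              have h1 : |φ ((k:ℝ) / a N)| * s ^ k ≤ M * s ^ k :=
                mul_le_mul_of_nonneg_right (hφb _) (pow_nonneg hs0 k)
              have h2 : 0 ≤ M * s ^ k := le_trans (by positivity) h1
              exact mul_le_mul h1 hGk (hGpos k).le h2
          _ = M * (C * ((k:ℝ)^p / (a N)^p)) * s ^ k * (a N)^p := by
              field_simp
          _ = M * (C * ((k:ℝ)/a N)^p) * s ^ k * (a N)^p := by rw [hrw]
      have hsk := hskey t ht
      simp only [hbdef]
      have hb1 : 0 ≤ M * G 0 * Real.exp β * Real.exp (-(β*t)) := by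
        have := (hGpos 0).le; positivity
      have hq0 : 0 ≤ ((k:ℝ)/a N)^p := Real.rpow_nonneg (by positivity) p
      have hsk0 : 0 ≤ s ^ k := pow_nonneg hs0 k
      have hstep : M * (C * ((k:ℝ)/a N)^p) * s ^ k
          ≤ M * C * Real.exp β * (t^p * Real.exp (-(β*t))) := by
        have e1 : M * (C * ((k:ℝ)/a N)^p) * s ^ k ≤ M * (C * t^p) * s ^ k := by
          exact mul_le_mul_of_nonneg_right
            (mul_le_mul_of_nonneg_left (mul_le_mul_of_nonneg_left hkp hC0) hM) hsk0
        have e2 : M * (C * t^p) * s ^ k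
            ≤ M * (C * t^p) * (Real.exp β * Real.exp (-(β*t))) := by
          have h0 : 0 ≤ M * (C * t^p) := by
            have := Real.rpow_nonneg ht.le p; positivity
          exact mul_le_mul_of_nonneg_left hsk h0
        calc M * (C * ((k:ℝ)/a N)^p) * s ^ k ≤ M * (C * t^p) * s ^ k := e1
          _ ≤ M * (C * t^p) * (Real.exp β * Real.exp (-(β*t))) := e2
          _ = M * C * Real.exp β * (t^p * Real.exp (-(β*t))) := by ring
      show ‖F N t‖ ≤ M * G 0 * Real.exp β * Real.exp (-(β*t))
          + M * C * Real.exp β * (t^p * Real.exp (-(β*t)))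
      linarith [hF.trans hstep]
  -- integrability of the bound
  have hbint : Integrable bound (volume.restrict (Ioi (0:ℝ))) := by
    have i1 : IntegrableOn (fun t : ℝ => Real.exp (-(β*t))) (Ioi 0) := by
      have := exp_neg_integrableOn_Ioi 0 hβ
      refine this.congr_fun (fun x _ => by dsimp only; rw [neg_mul]) measurableSet_Ioi
    have i2 : IntegrableOn (fun t : ℝ => t^p * Real.exp (-(β*t))) (Ioi 0) := by
      have h0 : IntegrableOn (fun x : ℝ => Real.exp (-x) * x ^ p) (Ioi 0) := by
        have := Real.GammaIntegral_convergent (by linarith : (0:ℝ) < p + 1)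
        simpa using this
      have h3 : IntegrableOn (fun x : ℝ => Real.exp (-(β*x)) * (β*x) ^ p) (Ioi 0) := by
        have := (integrableOn_Ioi_comp_mul_left_iff
          (fun x : ℝ => Real.exp (-x) * x ^ p) 0 hβ).mpr (by simpa using h0)
        simpa using this
      have h4 : IntegrableOn (fun x : ℝ => β^p * (x^p * Real.exp (-(β*x)))) (Ioi 0) :=
        h3.congr_fun (fun x hx => by
          dsimp only; rw [Real.mul_rpow hβ.le (le_of_lt hx)]; ring) measurableSet_Ioi
      have h5 : IntegrableOn
          (fun x : ℝ => (β^p)⁻¹ * (β^p * (x^p * Real.exp (-(β*x))))) (Ioi 0) :=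
        h4.const_mul ((β^p)⁻¹)
      refine h5.congr_fun (fun x _ => ?_) measurableSet_Ioi
      have hne : (β:ℝ)^p ≠ 0 := (Real.rpow_pos_of_pos hβ p).ne'
      field_simp
    exact ((i1.const_mul _).add (i2.const_mul _))
  -- pointwise convergence
  have hlim : ∀ᵐ t ∂(volume.restrict (Ioi (0:ℝ))),
      Filter.Tendsto (fun N => F N t) atTop (nhds (lim t)) := by
    rw [ae_restrict_iff' measurableSet_Ioi]
    refine ae_of_all _ (fun t ht => ?_)
    have ht : (0:ℝ) < t := ht
    have hkt : Filter.Tendsto (fun N => ⌊a N * t⌋₊) atTop atTop :=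
      tendsto_nat_floor_atTop.comp (ha.atTop_mul_const ht)
    have hdiv : Filter.Tendsto (fun N => (⌊a N * t⌋₊ : ℝ)/a N) atTop (nhds t) := by
      have := (tendsto_nat_floor_mul_div_atTop ht.le).comp ha
      exact this.congr (fun N => by simp [Function.comp, mul_comm])
    have hφt : Filter.Tendsto (fun N => φ ((⌊a N * t⌋₊ : ℝ)/a N)) atTop (nhds (φ t)) :=
      (hφ.tendsto t).comp hdiv
    have hGc : Filter.Tendsto (fun N => G ⌊a N * t⌋₊ / (⌊a N * t⌋₊ : ℝ)^p)
        atTop (nhds c) := hG.comp hkt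
    have hpow : Filter.Tendsto (fun N => ((⌊a N * t⌋₊ : ℝ)/a N)^p) atTop (nhds (t^p)) :=
      (Real.continuousAt_rpow_const t p (Or.inl ht.ne')).tendsto.comp hdiv
    have hexp : Filter.Tendsto (fun N => (1 - β/a N)^(⌊a N * t⌋₊)) atTop
        (nhds (Real.exp (-(β*t)))) := by
      have hlog : Filter.Tendsto (fun N => a N * Real.log (1 - β / a N))
          atTop (nhds (-β)) := by
        have := (Real.tendsto_mul_log_one_add_div_atTop (-β)).comp ha
        refine this.congr (fun N => ?_)
        simp [Function.comp, sub_eq_add_neg, neg_div]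
      have hprod : Filter.Tendsto
          (fun N => ((⌊a N * t⌋₊ : ℝ)/a N) * (a N * Real.log (1 - β/a N)))
          atTop (nhds (t * (-β))) := hdiv.mul hlog
      have hcomp := (Real.continuous_exp.tendsto (t * (-β))).comp hprod
      have heq : Real.exp (t * (-β)) = Real.exp (-(β*t)) := by ring_nf
      rw [heq] at hcomp
      refine hcomp.congr' ?_
      filter_upwards [ha.eventually_gt_atTop β, ha.eventually_gt_atTop 0] with N h1 h2
      have hs : (0:ℝ) < 1 - β / a N := by
        have : β / a N < 1 := (div_lt_one h2).mpr h1
        linarith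
      have : ((⌊a N * t⌋₊ : ℝ)/a N) * (a N * Real.log (1 - β/a N))
          = (⌊a N * t⌋₊ : ℝ) * Real.log (1 - β/a N) := by
        field_simp
      rw [Function.comp_apply, this, ← Real.log_pow, Real.exp_log (pow_pos hs _)]
    have hcombined := (hφt.mul hexp).mul (hGc.mul hpow)
    refine hcombined.congr' ?_
    filter_upwards [hkt.eventually_ge_atTop 1, ha.eventually_gt_atTop 0] with N hk1 ha0
    have hkpos : (0:ℝ) < (⌊a N * t⌋₊ : ℝ)^p :=
      Real.rpow_pos_of_pos (by exact_mod_cast hk1) p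
    have hrw : ((⌊a N * t⌋₊ : ℝ)/a N)^p = (⌊a N * t⌋₊ : ℝ)^p / (a N)^p :=
      Real.div_rpow (Nat.cast_nonneg _) ha0.le p
    simp only [hFdef, hgdef]
    rw [hrw]
    field_simp
  -- dominated convergence
  have hDCT := tendsto_integral_filter_of_dominated_convergence
    (μ := volume.restrict (Ioi (0:ℝ))) (F := F) (f := lim) bound
    (Filter.Eventually.of_forall hmeas) hbound hbint hlim
  -- identify the integrals with the sums
  refine hDCT.congr' ?_
  filter_upwards [hev] with N hN
  have ha1 : (1:ℝ) ≤ a N := le_of_lt (lt_of_le_of_lt (le_max_left _ _) hN)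
  have haβ : β < a N := lt_of_le_of_lt (le_max_right _ _) hN
  have ha0 : (0:ℝ) < a N := lt_of_lt_of_le zero_lt_one ha1
  have hap0 : (0:ℝ) < (a N)^p := Real.rpow_pos_of_pos ha0 p
  have hs0 : 0 ≤ 1 - β / a N := by
    have : β / a N ≤ 1 := (div_le_one ha0).mpr haβ.le
    linarith
  have hs1 : 1 - β / a N < 1 := by
    have : 0 < β / a N := div_pos hβ ha0
    linarith
  -- summability
  have hsum : Summable (fun k : ℕ => |g N k|) := by
    have hb : ∀ k : ℕ, |φ ((k:ℝ)/a N) / (a N)^p| ≤ M / (a N)^p := by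
      intro k
      rw [abs_div, abs_of_pos hap0]
      exact (div_le_div_iff_of_pos_right hap0).mpr (hφb _)
    have := st11_summable hp hs0 hs1 hGpos hC
      (φ := fun k : ℕ => φ ((k:ℝ)/a N) / (a N)^p) (M := M / (a N)^p) hb
    refine this.congr (fun k => ?_)
    simp only [hgdef]
    congr 1
    ring
  -- compute the integral
  have hint : (∫ t in Ioi (0:ℝ), F N t) = (a N)⁻¹ * ∑' k, g N k := by
    have := integral_comp_mul_left_Ioi (fun x : ℝ => g N ⌊x⌋₊) 0 ha0
    simp only [mul_zero, smul_eq_mul] at this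
    rw [show (∫ t in Ioi (0:ℝ), F N t) = ∫ x in Ioi (0:ℝ), g N ⌊a N * x⌋₊ from rfl,
      this, st11_integral hsum]
  rw [hint]
  rw [show (∑' k : ℕ, g N k)
      = (∑' k : ℕ, φ ((k:ℝ)/a N) * (1 - β / a N)^k * G k) / (a N)^p by
    rw [← tsum_div_const]]
  rw [Real.rpow_add_one ha0.ne' p, inv_mul_eq_div, div_div]


lemma st11_div_helper (x y z : ℝ) (hz : z ≠ 0) : (x/z)/(y/z) = x/y := by
  rcases eq_or_ne y 0 with rfl | hy
  · simp
  · field_simp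

/-- Fix `T > 0`, `α > -1`, `a_N → ∞`, and let `s_N = 1 - (α+2)/(T a_N)`.
If `G(k) ~ (c/(α+1)) k^{α+1}` with `c > 0`, then for every bounded continuous
`f : ℝ → ℝ`, `(1/Q₀(s_N)) Σ_k f(k/a_N) s_N^k G(k)` converges to
`∫_0^∞ f(r) (1/Γ(α+2)) ((α+2)/T)^{α+2} r^{α+1} e^{-(α+2)r/T} dr`; that is, the
rescaled tilted measures converge weakly to the Gamma distribution with shape `α+2`
and mean `T`. -/
theorem stmt11 (T α c : ℝ) (hT : 0 < T) (hα : -1 < α) (hc : 0 < c)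
    (G : ℕ → ℝ) (hGpos : ∀ k, 0 < G k)
    (hG : Tendsto (fun k : ℕ => G k / (k : ℝ) ^ (α + 1)) atTop (nhds (c / (α + 1))))
    (a : ℕ → ℝ) (ha : Tendsto a atTop atTop)
    (f : ℝ → ℝ) (hf : Continuous f) (hfb : ∃ M : ℝ, ∀ x, |f x| ≤ M) :
    Tendsto (fun N : ℕ =>
        (∑' k : ℕ, f ((k : ℝ) / a N) * (1 - (α + 2) / (T * a N)) ^ k * G k)
          / (∑' k : ℕ, (1 - (α + 2) / (T * a N)) ^ k * G k))
      atTop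
      (nhds (∫ r in Set.Ioi (0 : ℝ),
        f r * ((1 / Real.Gamma (α + 2)) * ((α + 2) / T) ^ (α + 2)
          * r ^ (α + 1) * Real.exp (-(α + 2) * r / T)))) := by
  obtain ⟨M, hM⟩ := hfb
  have hp : (0:ℝ) < α + 1 := by linarith
  have hα2 : (0:ℝ) < α + 2 := by linarith
  set β : ℝ := (α + 2) / T with hβdef
  have hβ : 0 < β := div_pos hα2 hT
  have hΓ : 0 < Real.Gamma (α + 2) := Real.Gamma_pos_of_pos hα2
  have hc' : (0:ℝ) < c / (α + 1) := div_pos hc hp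
  -- the two applications of the key lemma
  have hnum := st11_key hp hβ hGpos hG ha hf hM
  have hden := st11_key (M := 1) hp hβ hGpos hG ha
    (continuous_const : Continuous fun _ : ℝ => (1:ℝ)) (fun x => by norm_num)
  -- value of the denominator integral
  set I1 : ℝ := ∫ t in Ioi (0:ℝ), (1:ℝ) * Real.exp (-(β*t)) * (c / (α+1) * t^(α+1)) with hI1def
  have hI1 : I1 = c / (α+1) * ((1/β)^(α+2) * Real.Gamma (α+2)) := by
    have h1 : I1 = c / (α+1) * ∫ t in Ioi (0:ℝ), t^((α+2)-1) * Real.exp (-(β*t)) := by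
      rw [← integral_const_mul]
      refine integral_congr_ae (Filter.Eventually.of_forall (fun t => ?_))
      dsimp only
      rw [show (α:ℝ)+2-1 = α+1 by ring]
      ring
    rw [h1, Real.integral_rpow_mul_exp_neg_mul_Ioi hα2 hβ]
  have hI1pos : 0 < I1 := by
    rw [hI1]
    have : (0:ℝ) < (1/β)^(α+2) := Real.rpow_pos_of_pos (by positivity) _
    positivity
  have hdiv := hnum.div hden hI1pos.ne'
  -- identify the limit
  have hfinal : (∫ t in Ioi (0:ℝ), f t * Real.exp (-(β*t)) * (c / (α+1) * t^(α+1))) / I1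
      = ∫ r in Set.Ioi (0 : ℝ),
        f r * ((1 / Real.Gamma (α + 2)) * β ^ (α + 2)
          * r ^ (α + 1) * Real.exp (-(α + 2) * r / T)) := by
    rw [div_eq_inv_mul, ← integral_const_mul]
    refine integral_congr_ae (Filter.Eventually.of_forall (fun t => ?_))
    have hE : Real.exp (-(β*t)) = Real.exp (-(α + 2) * t / T) := by
      rw [hβdef]; congr 1; ring
    dsimp only
    rw [hI1, hE]
    have hB : (1/β)^(α+2) = (β^(α+2))⁻¹ := by
      rw [one_div, Real.inv_rpow hβ.le]
    rw [hB]
    have hBne : β^(α+2) ≠ 0 := (Real.rpow_pos_of_pos hβ _).ne'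
    field_simp
  rw [← hfinal]
  refine hdiv.congr' ?_
  filter_upwards [ha.eventually_gt_atTop 0] with N hN
  have hz : (a N)^((α+1)+1) ≠ 0 := (Real.rpow_pos_of_pos hN _).ne'
  have e1 : (∑' k : ℕ, f ((k:ℝ)/a N) * (1 - β / a N)^k * G k)
      = ∑' k : ℕ, f ((k:ℝ)/a N) * (1 - (α+2)/(T * a N))^k * G k := by
    rw [show β / a N = (α+2)/(T * a N) by rw [hβdef, div_div]]
  have e2 : (∑' k : ℕ, (1:ℝ) * (1 - β / a N)^k * G k)
      = ∑' k : ℕ, (1 - (α+2)/(T * a N))^k * G k := by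
    rw [show β / a N = (α+2)/(T * a N) by rw [hβdef, div_div]]
    simp only [one_mul]
  simp only [Pi.div_apply]
  rw [st11_div_helper _ _ _ hz, e1, e2]
end

section
/- Fix T > 0 and a sequence a_N → ∞, and suppose G : ℤ≥0 → (0,∞) satisfies G(k) → C₀ ∈ (0,∞) as k → ∞. Let s_N = 1 - 1/(T a_N). Then for every bounded continuous f : ℝ → ℝ, (1/Q_0(s_N)) Σ_{k≥0} f(k/a_N) s_N^k G(k) → (1/T) ∫_0^∞ f(r) e^{-r/T} dr as N → ∞. -/
open Filter Set MeasureTheory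

lemma stmt12_iUnion : (⋃ k : ℕ, Ioc (k : ℝ) (k + 1)) = Ioi 0 := by
  ext x
  simp only [mem_iUnion, mem_Ioc, mem_Ioi]
  constructor
  · rintro ⟨k, hk1, _⟩
    exact lt_of_le_of_lt (Nat.cast_nonneg k) hk1
  · intro hx
    refine ⟨⌈x⌉₊ - 1, ?_, ?_⟩
    · have h1 : 1 ≤ ⌈x⌉₊ := Nat.one_le_ceil_iff.mpr hx
      have h2 : (⌈x⌉₊ : ℝ) < x + 1 := Nat.ceil_lt_add_one hx.le
      push_cast [Nat.cast_sub h1]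
      linarith
    · have h1 : 1 ≤ ⌈x⌉₊ := Nat.one_le_ceil_iff.mpr hx
      have h2 : x ≤ (⌈x⌉₊ : ℝ) := Nat.le_ceil x
      push_cast [Nat.cast_sub h1]
      linarith

lemma stmt12_disj : Pairwise (Function.onFun Disjoint (fun k : ℕ => Ioc (k : ℝ) (k + 1))) := by
  intro i j hij
  rw [Function.onFun, Set.Ioc_disjoint_Ioc]
  rcases hij.lt_or_gt with h | h
  · have : (i : ℝ) + 1 ≤ j := by exact_mod_cast h
    calc min ((i:ℝ)+1) ((j:ℝ)+1) ≤ (i:ℝ)+1 := min_le_left _ _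
      _ ≤ (j:ℝ) := this
      _ ≤ max (i:ℝ) (j:ℝ) := le_max_right _ _
  · have : (j : ℝ) + 1 ≤ i := by exact_mod_cast h
    calc min ((i:ℝ)+1) ((j:ℝ)+1) ≤ (j:ℝ)+1 := min_le_right _ _
      _ ≤ (i:ℝ) := this
      _ ≤ max (i:ℝ) (j:ℝ) := le_max_left _ _

lemma stmt12_ceil_eq {k : ℕ} {x : ℝ} (hx : x ∈ Ioc (k : ℝ) (k + 1)) : ⌈x⌉₊ - 1 = k := by
  have h : ⌈x⌉₊ = k + 1 := by
    rw [Nat.ceil_eq_iff (Nat.succ_ne_zero k)]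
    exact ⟨by simpa using hx.1, by exact_mod_cast hx.2⟩
  omega

lemma stmt12_tsum_eq (g : ℕ → ℝ)
    (hint : IntegrableOn (fun x : ℝ => g (⌈x⌉₊ - 1)) (Ioi 0)) :
    ∑' k : ℕ, g k = ∫ x in Ioi (0 : ℝ), g (⌈x⌉₊ - 1) := by
  rw [← stmt12_iUnion] at hint ⊢
  rw [integral_iUnion (fun k => measurableSet_Ioc) stmt12_disj hint]
  refine tsum_congr fun k => ?_
  rw [setIntegral_congr_fun measurableSet_Ioc (g := fun _ => g k)
    (fun x hx => by rw [stmt12_ceil_eq hx])]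
  simp [Real.volume_Ioc]

-- basic facts about s = 1 - 1/(T*a) in the "good" regime
lemma stmt12_s_facts {T A : ℝ} (hT : 0 < T) (h2 : 2 ≤ T * A) :
    (1:ℝ)/2 ≤ 1 - 1 / (T * A) ∧ 1 - 1 / (T * A) < 1 := by
  have hTA : (0:ℝ) < T * A := lt_of_lt_of_le two_pos h2
  have h1 : 1 / (T * A) ≤ 1 / 2 := by
    apply one_div_le_one_div_of_le two_pos h2
  have h0 : 0 < 1 / (T * A) := by positivity
  constructor <;> linarith

-- key pointwise bound : for x > 0, with k = ⌈x⌉₊ - 1, s^k ≤ exp(log s * x) / s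
lemma stmt12_pow_le {s x : ℝ} (hs0 : 0 < s) (hs1 : s < 1) (hx : 0 < x) :
    s ^ (⌈x⌉₊ - 1) ≤ Real.exp (Real.log s * x) / s := by
  have hls : Real.log s < 0 := Real.log_neg hs0 hs1
  have h1 : 1 ≤ ⌈x⌉₊ := Nat.one_le_ceil_iff.mpr hx
  have hk : x - 1 ≤ ((⌈x⌉₊ - 1 : ℕ) : ℝ) := by
    have := Nat.le_ceil x
    push_cast [Nat.cast_sub h1]
    linarith
  have e1 : s ^ (⌈x⌉₊ - 1) = Real.exp (((⌈x⌉₊ - 1 : ℕ) : ℝ) * Real.log s) := by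
    rw [← Real.log_pow, Real.exp_log (pow_pos hs0 _)]
  rw [e1]
  have h2 : ((⌈x⌉₊ - 1 : ℕ) : ℝ) * Real.log s ≤ (x - 1) * Real.log s :=
    mul_le_mul_of_nonpos_right hk hls.le
  calc Real.exp (((⌈x⌉₊ - 1 : ℕ) : ℝ) * Real.log s) ≤ Real.exp ((x - 1) * Real.log s) :=
        Real.exp_le_exp.mpr h2
    _ = Real.exp (Real.log s * x) / s := by
        rw [show (x - 1) * Real.log s = Real.log s * x - Real.log s by ring,
          Real.exp_sub, Real.exp_log hs0]

lemma stmt12_integrable {s C : ℝ} (hs0 : 0 < s) (hs1 : s < 1) (g : ℕ → ℝ)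
    (hg : ∀ k, |g k| ≤ C * s ^ k) :
    IntegrableOn (fun x : ℝ => g (⌈x⌉₊ - 1)) (Ioi 0) := by
  have hmeas : Measurable fun x : ℝ => g (⌈x⌉₊ - 1) :=
    (measurable_from_nat (f := fun m : ℕ => g (m - 1))).comp Nat.measurable_ceil
  have hC : 0 ≤ C := by simpa using (abs_nonneg (g 0)).trans (hg 0)
  have hls : Real.log s < 0 := Real.log_neg hs0 hs1
  have hint : IntegrableOn (fun x : ℝ => (C / s) * Real.exp (Real.log s * x)) (Ioi 0) := by
    have := (exp_neg_integrableOn_Ioi 0 (neg_pos.mpr hls)).const_mul (C / s)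
    simpa [neg_neg, neg_mul, IntegrableOn] using this
  refine hint.mono' hmeas.aestronglyMeasurable.restrict ?_
  rw [ae_restrict_iff' measurableSet_Ioi]
  refine ae_of_all _ fun x hx => ?_
  have hb := stmt12_pow_le hs0 hs1 hx
  calc ‖g (⌈x⌉₊ - 1)‖ = |g (⌈x⌉₊ - 1)| := Real.norm_eq_abs _
    _ ≤ C * s ^ (⌈x⌉₊ - 1) := hg _
    _ ≤ C * (Real.exp (Real.log s * x) / s) := mul_le_mul_of_nonneg_left hb hC
    _ = (C / s) * Real.exp (Real.log s * x) := by ring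

noncomputable def stmt12F (T : ℝ) (G : ℕ → ℝ) (a : ℕ → ℝ) (f : ℝ → ℝ) (N : ℕ) (r : ℝ) : ℝ :=
  f ((↑(⌈a N * r⌉₊ - 1) : ℝ) / a N) * (1 - 1 / (T * a N)) ^ (⌈a N * r⌉₊ - 1)
    * G (⌈a N * r⌉₊ - 1)

lemma stmt12_aux (T C₀ : ℝ) (hT : 0 < T)
    (G : ℕ → ℝ) (hG : Tendsto G atTop (nhds C₀))
    (a : ℕ → ℝ) (ha : Tendsto a atTop atTop)
    (f : ℝ → ℝ) (hf : Continuous f) (M : ℝ) (hfb : ∀ x, |f x| ≤ M)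
    (B : ℝ) (hB : ∀ k, |G k| ≤ B) :
    Tendsto (fun N : ℕ => (1 / (T * a N)) *
        ∑' k : ℕ, f ((k : ℝ) / a N) * (1 - 1 / (T * a N)) ^ k * G k)
      atTop
      (nhds ((1 / T) * ∫ r in Ioi (0 : ℝ), f r * Real.exp (-r / T) * C₀)) := by
  have hM : 0 ≤ M := (abs_nonneg _).trans (hfb 0)
  have hB0 : 0 ≤ B := (abs_nonneg _).trans (hB 0)
  have hgood : ∀ᶠ N in atTop, 1 ≤ a N ∧ 2 ≤ T * a N := by
    filter_upwards [ha.eventually_ge_atTop 1,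
      (ha.const_mul_atTop hT).eventually_ge_atTop 2] with N h1 h2
    exact ⟨h1, h2⟩
  have hgbd : ∀ (N : ℕ) (k : ℕ), 0 < 1 - 1 / (T * a N) →
      |f ((k:ℝ)/a N) * (1 - 1/(T*a N))^k * G k| ≤ (M*B) * (1 - 1/(T*a N))^k := by
    intro N k hs0
    rw [abs_mul, abs_mul, abs_pow, abs_of_pos hs0]
    calc |f ((k:ℝ)/a N)| * (1 - 1/(T*a N))^k * |G k|
        ≤ M * (1 - 1/(T*a N))^k * B := by
          have h1 := hfb ((k:ℝ)/a N); have h2 := hB k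
          have hp : (0:ℝ) ≤ (1 - 1/(T*a N))^k := pow_nonneg hs0.le k
          exact mul_le_mul (mul_le_mul h1 le_rfl hp hM) h2 (abs_nonneg _) (by positivity)
      _ = (M*B) * (1 - 1/(T*a N))^k := by ring
  -- Step 1 : eventual equality with the integral of F
  have heq : ∀ᶠ N in atTop, (1/(T * a N)) *
      (∑' k : ℕ, f ((k:ℝ)/a N) * (1 - 1/(T * a N))^k * G k)
      = (1/T) * ∫ r in Ioi (0:ℝ), stmt12F T G a f N r := by
    filter_upwards [hgood] with N hN
    obtain ⟨h1, h2⟩ := hN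
    have ha0 : 0 < a N := lt_of_lt_of_le one_pos h1
    obtain ⟨hs_half, hs1⟩ := stmt12_s_facts hT h2
    have hs0 : 0 < 1 - 1/(T * a N) := by linarith
    have hint : IntegrableOn (fun x : ℝ =>
        f ((↑(⌈x⌉₊ - 1):ℝ)/a N) * (1 - 1/(T*a N))^(⌈x⌉₊-1) * G (⌈x⌉₊-1)) (Ioi 0) :=
      stmt12_integrable hs0 hs1
        (fun k : ℕ => f ((k:ℝ)/a N) * (1 - 1/(T*a N))^k * G k)
        (fun k => hgbd N k hs0)
    rw [stmt12_tsum_eq (fun k : ℕ => f ((k:ℝ)/a N) * (1 - 1/(T*a N))^k * G k) hint]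
    beta_reduce
    have hI : ∫ r in Ioi (0:ℝ), stmt12F T G a f N r
        = (a N)⁻¹ * ∫ x in Ioi (0:ℝ),
            f ((↑(⌈x⌉₊ - 1):ℝ)/a N) * (1 - 1/(T*a N))^(⌈x⌉₊-1) * G (⌈x⌉₊-1) := by
      have hcv := integral_comp_mul_left_Ioi (fun x : ℝ =>
        f ((↑(⌈x⌉₊ - 1):ℝ)/a N) * (1 - 1/(T*a N))^(⌈x⌉₊-1) * G (⌈x⌉₊-1)) 0 ha0
      rw [mul_zero, smul_eq_mul] at hcv
      exact hcv
    rw [hI]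
    have hane : a N ≠ 0 := ne_of_gt ha0
    have hTne : T ≠ 0 := ne_of_gt hT
    field_simp
  -- Step 2 : dominated convergence
  have hJ : Tendsto (fun N => ∫ r in Ioi (0:ℝ), stmt12F T G a f N r) atTop
      (nhds (∫ r in Ioi (0:ℝ), f r * Real.exp (-r/T) * C₀)) := by
    apply tendsto_integral_filter_of_dominated_convergence
      (fun r => (2*(M*B)) * Real.exp (-(1/T) * r))
    · refine Eventually.of_forall fun N => ?_
      have hmeas : Measurable (stmt12F T G a f N) :=
        (measurable_from_nat (f := fun m : ℕ =>
          f ((↑(m-1):ℝ)/a N) * (1 - 1/(T*a N))^(m-1) * G (m-1))).comp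
          (Nat.measurable_ceil.comp (measurable_id.const_mul (a N)))
      exact hmeas.aestronglyMeasurable.restrict
    · filter_upwards [hgood] with N hN
      obtain ⟨h1, h2⟩ := hN
      have ha0 : 0 < a N := lt_of_lt_of_le one_pos h1
      obtain ⟨hs_half, hs1⟩ := stmt12_s_facts hT h2
      have hs0 : 0 < 1 - 1/(T * a N) := by linarith
      rw [ae_restrict_iff' measurableSet_Ioi]
      refine ae_of_all _ fun r hr => ?_
      have hr0 : 0 < r := hr
      have hx : 0 < a N * r := mul_pos ha0 hr0
      have hpow := stmt12_pow_le hs0 hs1 hx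
      have hlog : Real.log (1 - 1/(T*a N)) ≤ -(1/(T * a N)) := by
        have := Real.log_le_sub_one_of_pos hs0
        linarith
      have hexp : Real.exp (Real.log (1 - 1/(T*a N)) * (a N * r)) ≤ Real.exp (-(1/T) * r) := by
        apply Real.exp_le_exp.mpr
        have hstep : Real.log (1 - 1/(T*a N)) * (a N * r) ≤ -(1/(T * a N)) * (a N * r) :=
          mul_le_mul_of_nonneg_right hlog hx.le
        have : -(1/(T * a N)) * (a N * r) = -(1/T) * r := by
          field_simp
        linarith
      have hdiv2 : Real.exp (Real.log (1 - 1/(T*a N)) * (a N * r)) / (1 - 1/(T*a N))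
          ≤ 2 * Real.exp (-(1/T) * r) := by
        rw [div_le_iff₀ hs0]
        nlinarith [Real.exp_pos (-(1/T) * r), Real.exp_pos (Real.log (1 - 1/(T*a N)) * (a N * r))]
      calc ‖stmt12F T G a f N r‖
          ≤ (M*B) * (1 - 1/(T*a N))^(⌈a N * r⌉₊ - 1) := by
            rw [Real.norm_eq_abs]; exact hgbd N _ hs0
        _ ≤ (M*B) * (2 * Real.exp (-(1/T) * r)) := by
            apply mul_le_mul_of_nonneg_left _ (by positivity)
            exact hpow.trans hdiv2
        _ = (2*(M*B)) * Real.exp (-(1/T) * r) := by ring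
    · have := (exp_neg_integrableOn_Ioi 0 (by positivity : (0:ℝ) < 1/T)).const_mul (2*(M*B))
      exact this
    · rw [ae_restrict_iff' measurableSet_Ioi]
      refine ae_of_all _ fun r hr => ?_
      have hr0 : 0 < r := hr
      have hEa : ∀ᶠ N in atTop, 0 < a N := ha.eventually_gt_atTop 0
      have hkub : ∀ᶠ N in atTop, ((⌈a N * r⌉₊ - 1 : ℕ):ℝ) / a N ≤ r := by
        filter_upwards [hEa] with N h0
        have hx : 0 < a N * r := mul_pos h0 hr0
        have h1 : 1 ≤ ⌈a N * r⌉₊ := Nat.one_le_ceil_iff.mpr hx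
        have h2 : (⌈a N * r⌉₊:ℝ) < a N * r + 1 := Nat.ceil_lt_add_one hx.le
        rw [div_le_iff₀ h0]
        push_cast [Nat.cast_sub h1]
        nlinarith
      have hklb : ∀ᶠ N in atTop, r - 1/a N ≤ ((⌈a N * r⌉₊ - 1 : ℕ):ℝ) / a N := by
        filter_upwards [hEa] with N h0
        have hx : 0 < a N * r := mul_pos h0 hr0
        have h1 : 1 ≤ ⌈a N * r⌉₊ := Nat.one_le_ceil_iff.mpr hx
        have h2 : a N * r ≤ (⌈a N * r⌉₊:ℝ) := Nat.le_ceil _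
        rw [le_div_iff₀ h0]
        push_cast [Nat.cast_sub h1]
        have e : (r - 1/a N) * a N = r * a N - 1 := by field_simp
        have e2 : a N * r = r * a N := mul_comm _ _
        linarith
      have hdiv : Tendsto (fun N => ((⌈a N * r⌉₊ - 1 : ℕ):ℝ) / a N) atTop (nhds r) := by
        have hlow : Tendsto (fun N => r - 1/a N) atTop (nhds r) := by
          have h2 : Tendsto (fun N => 1/a N) atTop (nhds 0) := by
            simpa [one_div, Function.comp_def] using tendsto_inv_atTop_zero.comp ha
          simpa using tendsto_const_nhds.sub h2
        exact tendsto_of_tendsto_of_tendsto_of_le_of_le' hlow tendsto_const_nhds hklb hkub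
      have hktop : Tendsto (fun N => ⌈a N * r⌉₊ - 1) atTop atTop := by
        rw [← tendsto_natCast_atTop_iff (R := ℝ)]
        refine tendsto_atTop_mono' _ ?_
          (tendsto_atTop_add_const_right atTop (-1) (ha.atTop_mul_const hr0))
        filter_upwards [hEa] with N h0
        have hx : 0 < a N * r := mul_pos h0 hr0
        have h1 : 1 ≤ ⌈a N * r⌉₊ := Nat.one_le_ceil_iff.mpr hx
        have h2 : a N * r ≤ (⌈a N * r⌉₊:ℝ) := Nat.le_ceil _
        push_cast [Nat.cast_sub h1]
        linarith
      have hGk := hG.comp hktop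
      have hfk := (hf.tendsto r).comp hdiv
      have halog : Tendsto (fun N => a N * Real.log (1 - 1/(T * a N))) atTop (nhds (-1/T)) := by
        have h := (Real.tendsto_mul_log_one_add_div_atTop (-1/T)).comp ha
        convert h using 2 with N
        simp only [Function.comp_apply]
        ring_nf
      have harg : Tendsto (fun N => ((⌈a N * r⌉₊ - 1 : ℕ):ℝ) * Real.log (1 - 1/(T*a N)))
          atTop (nhds (-r/T)) := by
        have hmul := hdiv.mul halog
        have he : r * (-1/T) = -r/T := by ring
        rw [he] at hmul
        refine Tendsto.congr' ?_ hmul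
        filter_upwards [hEa] with N h0
        field_simp
      have hpow : Tendsto (fun N => (1 - 1/(T*a N)) ^ (⌈a N * r⌉₊ - 1)) atTop
          (nhds (Real.exp (-r/T))) := by
        have hexp := (Real.continuous_exp.tendsto _).comp harg
        refine Tendsto.congr' ?_ hexp
        filter_upwards [hgood] with N hN
        obtain ⟨h1, h2⟩ := hN
        obtain ⟨hs_half, _⟩ := stmt12_s_facts hT h2
        have hs0 : 0 < 1 - 1/(T*a N) := by linarith
        simp only [Function.comp_apply]
        rw [← Real.log_pow, Real.exp_log (pow_pos hs0 _)]
      exact (hfk.mul hpow).mul hGk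
  exact Tendsto.congr' (heq.mono fun N h => h.symm) (tendsto_const_nhds.mul hJ)


/-- Fix `T > 0`, `a_N → ∞`, and suppose `G : ℕ → (0,∞)` satisfies
`G(k) → C₀ ∈ (0,∞)`. With `s_N = 1 - 1/(T a_N)`, for every bounded continuous
`f : ℝ → ℝ`, `(1/Q₀(s_N)) Σ_k f(k/a_N) s_N^k G(k) → (1/T) ∫_0^∞ f(r) e^{-r/T} dr`. -/
theorem stmt12 (T C₀ : ℝ) (hT : 0 < T) (hC₀ : 0 < C₀)
    (G : ℕ → ℝ) (hGpos : ∀ k, 0 < G k)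
    (hG : Tendsto (fun k : ℕ => G k) atTop (nhds C₀))
    (a : ℕ → ℝ) (ha : Tendsto a atTop atTop)
    (f : ℝ → ℝ) (hf : Continuous f) (hfb : ∃ M : ℝ, ∀ x, |f x| ≤ M) :
    Tendsto (fun N : ℕ =>
        (∑' k : ℕ, f ((k : ℝ) / a N) * (1 - 1 / (T * a N)) ^ k * G k)
          / (∑' k : ℕ, (1 - 1 / (T * a N)) ^ k * G k))
      atTop
      (nhds ((1 / T) * ∫ r in Set.Ioi (0 : ℝ), f r * Real.exp (-r / T))) := by
  obtain ⟨M, hfb⟩ := hfb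
  obtain ⟨B, hBmem⟩ := hG.bddAbove_range
  have hB : ∀ k, |G k| ≤ B := fun k => by
    rw [abs_of_pos (hGpos k)]; exact hBmem (Set.mem_range_self k)
  have hNum := stmt12_aux T C₀ hT G hG a ha f hf M hfb B hB
  have hDen0 := stmt12_aux T C₀ hT G hG a ha (fun _ => 1) continuous_const 1
    (fun x => by norm_num) B hB
  have hlim : (1 / T) * (∫ r in Ioi (0:ℝ), (fun _ : ℝ => (1:ℝ)) r * Real.exp (-r / T) * C₀)
      = C₀ := by
    have hTi : (0:ℝ) < T⁻¹ := by positivity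
    have hint_eq : (∫ r in Ioi (0:ℝ), (fun _ : ℝ => (1:ℝ)) r * Real.exp (-r / T) * C₀)
        = ∫ x in Ioi (0:ℝ), (fun y : ℝ => Real.exp (-y) * C₀) (T⁻¹ * x) := by
      refine setIntegral_congr_fun measurableSet_Ioi fun r _ => ?_
      simp only [one_mul]
      rw [neg_div, div_eq_inv_mul]
    rw [hint_eq, integral_comp_mul_left_Ioi (fun y : ℝ => Real.exp (-y) * C₀) 0 hTi,
      mul_zero, smul_eq_mul, inv_inv, integral_mul_const, integral_exp_neg_Ioi_zero]
    field_simp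
  have hDen : Tendsto (fun N : ℕ => (1 / (T * a N)) *
      ∑' k : ℕ, (1 - 1/(T * a N))^k * G k) atTop (nhds C₀) := by
    rw [hlim] at hDen0
    refine hDen0.congr fun N => ?_
    congr 1
    exact tsum_congr fun k => by rw [one_mul]
  have hq := hNum.div hDen (ne_of_gt hC₀)
  have hval : ((1/T) * ∫ r in Ioi (0:ℝ), f r * Real.exp (-r/T) * C₀) / C₀
      = (1/T) * ∫ r in Ioi (0:ℝ), f r * Real.exp (-r/T) := by
    rw [integral_mul_const]
    field_simp
  rw [hval] at hq
  refine Tendsto.congr' ?_ hq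
  filter_upwards [ha.eventually_gt_atTop 0] with N h0
  exact mul_div_mul_left _ _ (one_div_ne_zero (mul_pos hT h0).ne')
end

section
/- Let μ be the geometric-type distribution on ℤ≥0 with μ(k) proportional to s^k (c·(k+1)) for s ∈ (0,1) (i.e., G(k) = k+1). Then the marginal of the uniform-weight stationary measure μ_{N,L}(ξ) ∝ Π_x (ξ(x)+1) on Ω_N(L) satisfies, for every site x and 0 ≤ c ≤ L: μ_{N,L}(ξ(x) = c) = (c+1) · C(L-c+2N-3, 2N-3) / C(L+2N-1, 2N-1), where C(n,k) denotes the binomial coefficient. -/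
open Finset

/-- The configuration space `Ω_N(L)`: tuples of `N` non-negative integers summing to `L`. -/
def conf (N L : ℕ) : Finset (Fin N → ℕ) :=
  (Fintype.piFinset fun _ => range (L + 1)).filter fun ξ => ∑ x, ξ x = L

/-! Fixing `ξ x = c` splits off the weight `c + 1` and leaves a configuration of the remaining
`N - 1` sites with total `L - c`, so the marginal is `(c + 1) Z_{N-1}(L - c) / Z_N(L)` with
`Z_N(L) = ∑_{ξ ∈ Ω_N(L)} ∏_x (ξ x + 1)`. Peeling off one site at a time shows that `Z_N(L)` is the
coefficient of `t^L` in `(∑_k (k + 1) t^k)^N = (1 - t)^{-2N}`, which is `C(L + 2N - 1, 2N - 1)`. -/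

open PowerSeries

lemma mem_conf {N L : ℕ} {ξ : Fin N → ℕ} : ξ ∈ conf N L ↔ ∑ x, ξ x = L := by
  simp only [conf, mem_filter, Fintype.mem_piFinset, mem_range, and_iff_right_iff_imp]
  intro h y
  have := single_le_sum (fun i _ => Nat.zero_le (ξ i)) (mem_univ y)
  omega

lemma conf_zero (L : ℕ) : conf 0 L = if L = 0 then {finZeroElim} else ∅ := by
  ext ξ
  split_ifs with hL <;> simp [mem_conf, hL, eq_comm, Subsingleton.elim ξ finZeroElim]

section Weighted

variable {R : Type*} [CommSemiring R] (f : ℕ → R)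

lemma sum_filter_conf_prod_eq_mul {N L c : ℕ} (x : Fin (N + 1)) (hc : c ≤ L) :
    ∑ ξ ∈ (conf (N + 1) L).filter (fun ξ => ξ x = c), ∏ y, f (ξ y)
      = f c * ∑ η ∈ conf N (L - c), ∏ y, f (η y) := by
  rw [mul_sum]
  refine sum_nbij' (Fin.removeNth x) (Fin.insertNth (α := fun _ => ℕ) x c) ?_ ?_ ?_ ?_ ?_
  · intro ξ hξ
    rw [mem_filter, mem_conf, Fin.sum_univ_succAbove ξ x] at hξ
    rw [mem_conf]
    simp only [Fin.removeNth]
    omega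
  · intro η hη
    rw [mem_conf] at hη
    rw [mem_filter, mem_conf, Fin.sum_univ_succAbove _ x]
    simp only [Fin.insertNth_apply_same, Fin.insertNth_apply_succAbove, hη, and_true]
    omega
  · intro ξ hξ
    rw [mem_filter] at hξ
    rw [← hξ.2, Fin.insertNth_self_removeNth]
  · intro η _
    exact Fin.removeNth_insertNth (α := fun _ => ℕ) x c η
  · intro ξ hξ
    rw [mem_filter] at hξ
    rw [Fin.prod_univ_succAbove _ x, hξ.2]
    rfl

lemma sum_conf_succ_prod (N L : ℕ) :
    ∑ ξ ∈ conf (N + 1) L, ∏ y, f (ξ y)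
      = ∑ k ∈ range (L + 1), f k * ∑ η ∈ conf N (L - k), ∏ y, f (η y) := by
  have hmaps : ∀ ξ ∈ conf (N + 1) L, ξ 0 ∈ range (L + 1) := fun ξ hξ =>
    Fintype.mem_piFinset.mp (mem_filter.mp hξ).1 0
  rw [← sum_fiberwise_of_maps_to hmaps]
  exact sum_congr rfl fun k hk => sum_filter_conf_prod_eq_mul f 0 (mem_range_succ_iff.mp hk)

lemma sum_conf_prod_eq_coeff_pow (N L : ℕ) :
    ∑ ξ ∈ conf N L, ∏ y, f (ξ y) = coeff L (mk f ^ N) := by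
  induction N generalizing L with
  | zero => by_cases hL : L = 0 <;> simp [conf_zero, hL, coeff_one]
  | succ N ih =>
    rw [sum_conf_succ_prod, pow_succ', coeff_mul,
      Finset.Nat.sum_antidiagonal_eq_sum_range_succ fun i j => coeff i (mk f) * coeff j (mk f ^ N)]
    simp only [coeff_mk, ih]

end Weighted

lemma sum_conf_prod_add_one_eq_choose {R : Type*} [CommRing R] {N : ℕ} (hN : 0 < N) (L : ℕ) :
    ∑ ξ ∈ conf N L, ∏ y, ((ξ y : R) + 1) = ((L + 2 * N - 1).choose (2 * N - 1) : R) := by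
  have hweight : mk (fun k => (k : R) + 1) = (invOneSubPow R 2).val := by
    ext k
    simp [invOneSubPow_val_succ_eq_mk_add_choose, add_comm]
  rw [sum_conf_prod_eq_coeff_pow (fun k : ℕ => (k : R) + 1), hweight, ← Units.val_pow_eq_pow_val,
    invOneSubPow_eq_inv_one_sub_pow, ← pow_mul, ← invOneSubPow_eq_inv_one_sub_pow,
    invOneSubPow_val_eq_mk_sub_one_add_choose_of_pos R _ (by omega), coeff_mk,
    show 2 * N - 1 + L = L + 2 * N - 1 by omega]

/-- For the uniform-weight stationary measure
`μ_{N,L}(ξ) ∝ Π_x (ξ(x)+1)` on `Ω_N(L)` (the case `G(k) = k+1`), the one-site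
marginal satisfies, for every site `x` and `0 ≤ c ≤ L`,
`μ_{N,L}(ξ(x) = c) = (c+1) C(L-c+2N-3, 2N-3) / C(L+2N-1, 2N-1)`. -/
theorem stmt14 (N L : ℕ) (hN : 2 ≤ N) (x : Fin N) (c : ℕ) (hc : c ≤ L) :
    (∑ ξ ∈ (conf N L).filter (fun ξ => ξ x = c), ∏ y, ((ξ y : ℝ) + 1))
        / (∑ ξ ∈ conf N L, ∏ y, ((ξ y : ℝ) + 1))
    = ((c : ℝ) + 1) * (Nat.choose (L - c + 2 * N - 3) (2 * N - 3) : ℝ)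
        / (Nat.choose (L + 2 * N - 1) (2 * N - 1) : ℝ) := by
  obtain ⟨M, rfl⟩ : ∃ M, N = M + 1 := ⟨N - 1, by omega⟩
  rw [sum_filter_conf_prod_eq_mul (fun k => (k : ℝ) + 1) x hc,
    sum_conf_prod_add_one_eq_choose (by omega), sum_conf_prod_add_one_eq_choose (by omega),
    show L - c + 2 * M - 1 = L - c + 2 * (M + 1) - 3 by omega,
    show 2 * M - 1 = 2 * (M + 1) - 3 by omega]
end
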